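/- arXiv:1108.1385 — 5 statements merged into one kernel-verified Lean document; each statement's English description precedes it below -/
import Mathlib

section
/- The Souriau bracket fails the Jacobi identity: for the smooth functions f(p,q,θ) = θ, g(p,q,θ) = p, h(p,q,θ) = q on ℝ³ one has ⟦f,⟦g,h⟧⟧ + ⟦g,⟦h,f⟧⟧ + ⟦h,⟦f,g⟧⟧ = −1/ħ ≠ 0; in particular there exist smooth functions for which the cyclic Jacobi sum of Souriau brackets is nonzero. -/
open Complex

/-- Partial derivative in the `p` (first) coordinate. -/
noncomputable def dP (f : ℝ × ℝ × ℝ → ℂ) : ℝ × ℝ × ℝ → ℂ :=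
  fun x => deriv (fun s => f (s, x.2.1, x.2.2)) x.1

/-- Partial derivative in the `q` (second) coordinate. -/
noncomputable def dQ (f : ℝ × ℝ × ℝ → ℂ) : ℝ × ℝ × ℝ → ℂ :=
  fun x => deriv (fun s => f (x.1, s, x.2.2)) x.2.1

/-- Partial derivative in the fiber coordinate `θ` (third coordinate). -/
noncomputable def dT (f : ℝ × ℝ × ℝ → ℂ) : ℝ × ℝ × ℝ → ℂ :=
  fun x => deriv (fun s => f (x.1, x.2.1, s)) x.2.2

/-- Horizontal lift of `∂_q`: the operator `B = ∂_q − (p/ħ) ∂_θ`. -/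
noncomputable def Bop (hb : ℝ) (f : ℝ × ℝ × ℝ → ℂ) : ℝ × ℝ × ℝ → ℂ :=
  fun x => dQ f x - ((x.1 / hb : ℝ) : ℂ) * dT f x

/-- The Souriau bracket `⟦f,g⟧ = (∂_p f)(B g) − (∂_p g)(B f)`. -/
noncomputable def souriau (hb : ℝ) (f g : ℝ × ℝ × ℝ → ℂ) : ℝ × ℝ × ℝ → ℂ :=
  fun x => dP f x * Bop hb g x - dP g x * Bop hb f x

/-- The cyclic Jacobi sum of Souriau brackets of `f`, `g`, `h`. -/
noncomputable def jacobiCyc (hb : ℝ) (f g h : ℝ × ℝ × ℝ → ℂ) : ℝ × ℝ × ℝ → ℂ :=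
  fun x => souriau hb f (souriau hb g h) x + souriau hb g (souriau hb h f) x +
    souriau hb h (souriau hb f g) x


private lemma hasDerivAt_oR (x : ℝ) : HasDerivAt (fun s : ℝ => (s : ℂ)) 1 x := by
  simpa using (hasDerivAt_id x).ofReal_comp

private lemma deriv_ofReal' (x : ℝ) : deriv (fun s : ℝ => (s : ℂ)) x = 1 :=
  (hasDerivAt_oR x).deriv

private lemma deriv_ofReal_div (c : ℝ) (x : ℝ) :
    deriv (fun s : ℝ => ((s / c : ℝ) : ℂ)) x = 1 / (c : ℂ) := by
  have h : (fun s : ℝ => ((s / c : ℝ) : ℂ)) = fun s : ℝ => (s : ℂ) / (c : ℂ) := by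
    funext s; push_cast; ring
  rw [h, deriv_div_const, deriv_ofReal']

section
variable (hb : ℝ)

private lemma s_gh : souriau hb (fun x => (x.1 : ℂ)) (fun x => (x.2.1 : ℂ)) = fun _ => 1 := by
  funext x
  simp [souriau, Bop, dP, dQ, dT, deriv_ofReal']

private lemma s_hf : souriau hb (fun x => (x.2.1 : ℂ)) (fun x => (x.2.2 : ℂ)) = fun _ => 0 := by
  funext x
  simp [souriau, Bop, dP, dQ, dT, deriv_ofReal']

private lemma s_fg : souriau hb (fun x => (x.2.2 : ℂ)) (fun x => (x.1 : ℂ)) =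
    fun x => ((x.1 / hb : ℝ) : ℂ) := by
  funext x
  simp [souriau, Bop, dP, dQ, dT, deriv_ofReal']

end

/-- The Souriau bracket fails the Jacobi identity: for `f = θ`, `g = p`, `h = q` the cyclic
Jacobi sum is the nonzero constant `−1/ħ`; in particular there exist smooth functions whose
cyclic Jacobi sum of Souriau brackets is nonzero. -/
theorem souriau_jacobi_fails (hb : ℝ) (hhbar : 0 < hb) :
    (jacobiCyc hb (fun x => (x.2.2 : ℂ)) (fun x => (x.1 : ℂ)) (fun x => (x.2.1 : ℂ)) =
      fun _ => -1 / (hb : ℂ)) ∧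
    (-1 / (hb : ℂ) ≠ 0) ∧
    (∃ f g h : ℝ × ℝ × ℝ → ℂ, ContDiff ℝ (⊤ : ℕ∞) f ∧ ContDiff ℝ (⊤ : ℕ∞) g ∧ ContDiff ℝ (⊤ : ℕ∞) h ∧
      ∃ x, jacobiCyc hb f g h x ≠ 0) := by
  refine ⟨?_, ?_, ?_⟩
  · funext x
    simp only [jacobiCyc, s_gh, s_hf, s_fg]
    simp [souriau, Bop, dP, dQ, dT, deriv_ofReal', deriv_ofReal_div]
    ring
  · intro hcon
    have : (hb : ℂ) ≠ 0 := by exact_mod_cast hhbar.ne'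
    field_simp at hcon
    simp at hcon
  · refine ⟨fun x => (x.2.2 : ℂ), fun x => (x.1 : ℂ), fun x => (x.2.1 : ℂ), ?_, ?_, ?_,
      (0, 0, 0), ?_⟩
    · exact Complex.ofRealCLM.contDiff.comp (contDiff_snd.snd)
    · exact Complex.ofRealCLM.contDiff.comp contDiff_fst
    · exact Complex.ofRealCLM.contDiff.comp (contDiff_fst.comp contDiff_snd)
    · have h1 : jacobiCyc hb (fun x => (x.2.2 : ℂ)) (fun x => (x.1 : ℂ))
          (fun x => (x.2.1 : ℂ)) = fun _ => -1 / (hb : ℂ) := by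
        funext x
        simp only [jacobiCyc, s_gh, s_hf, s_fg]
        simp [souriau, Bop, dP, dQ, dT, deriv_ofReal', deriv_ofReal_div]
        ring
      rw [h1]
      have : (hb : ℂ) ≠ 0 := by exact_mod_cast hhbar.ne'
      intro hcon; field_simp at hcon; simp at hcon
end

section
/- (Proposition: the normal quantum product preserves the polarization.) Let H : ℝ^{2n+1} → ℂ be smooth with ∂_θ H = 0 and polynomial in the momenta, i.e. there is N such that every iterated p-derivative of H of total order > N vanishes identically. Let Ψ be a polarized prequantum wave function (∂_θ Ψ = iΨ and ∂_{p_m} Ψ = 0 for all m). Then the normal quantum product H •ν Ψ := Σ_{(j₁,…,j_n)∈ℕⁿ} (ħ/i)^{j₁+⋯+j_n} (∏_m 1/j_m!) (∂_{p₁}^{j₁}⋯∂_{p_n}^{j_n} H)·(B₁^{j₁}⋯B_n^{j_n} Ψ) (a finite sum) satisfies ∂_{p_ℓ}(H •ν Ψ) = 0 for every ℓ ∈ {1,…,n}; that is, H •ν Ψ is again polarized. -/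
open Complex

/-- The prequantum bundle over `ℝ^{2n}`: coordinates `(p, q, θ)`. -/
abbrev Yn (n : ℕ) := (Fin n → ℝ) × (Fin n → ℝ) × ℝ

/-- Partial derivative in the momentum coordinate `p_m`. -/
noncomputable def dPm {n : ℕ} (m : Fin n) (f : Yn n → ℂ) : Yn n → ℂ :=
  fun x => deriv (fun s => f (Function.update x.1 m s, x.2.1, x.2.2)) (x.1 m)

/-- Partial derivative in the position coordinate `q_m`. -/
noncomputable def dQm {n : ℕ} (m : Fin n) (f : Yn n → ℂ) : Yn n → ℂ :=
  fun x => deriv (fun s => f (x.1, Function.update x.2.1 m s, x.2.2)) (x.2.1 m)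

/-- Partial derivative in the fiber coordinate `θ`. -/
noncomputable def dTn {n : ℕ} (f : Yn n → ℂ) : Yn n → ℂ :=
  fun x => deriv (fun s => f (x.1, x.2.1, s)) x.2.2

/-- Horizontal lift of `∂_{q_m}`: the operator `B_m = ∂_{q_m} − (p_m/ħ) ∂_θ`. -/
noncomputable def Bm (hb : ℝ) {n : ℕ} (m : Fin n) (f : Yn n → ℂ) : Yn n → ℂ :=
  fun x => dQm m f x - ((x.1 m / hb : ℝ) : ℂ) * dTn f x

/-- The iterated operator `B₁^{j₁} ∘ ⋯ ∘ B_n^{j_n}`. -/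
noncomputable def Bmulti (hb : ℝ) {n : ℕ} (j : Fin n → ℕ) (f : Yn n → ℂ) : Yn n → ℂ :=
  (List.finRange n).foldr (fun m g => (Bm hb m)^[j m] g) f

/-- The iterated operator `∂_{p₁}^{j₁} ∘ ⋯ ∘ ∂_{p_n}^{j_n}`. -/
noncomputable def Pmulti {n : ℕ} (j : Fin n → ℕ) (f : Yn n → ℂ) : Yn n → ℂ :=
  (List.finRange n).foldr (fun m g => (dPm m)^[j m] g) f

/-- The iterated operator `∂_{q₁}^{j₁} ∘ ⋯ ∘ ∂_{q_n}^{j_n}`. -/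
noncomputable def Qmulti {n : ℕ} (j : Fin n → ℕ) (f : Yn n → ℂ) : Yn n → ℂ :=
  (List.finRange n).foldr (fun m g => (dQm m)^[j m] g) f


variable {n : ℕ}

noncomputable def Dv (v : Yn n) (f : Yn n → ℂ) : Yn n → ℂ := fun x => fderiv ℝ f x v

def eP (m : Fin n) : Yn n := (Pi.single m 1, 0, 0)
def eT : Yn n := (0, 0, 1)

lemma deriv_slice (f : Yn n → ℂ) (x v : Yn n) (s₀ : ℝ)
    (hf : DifferentiableAt ℝ f x) :
    deriv (fun s => f (x + (s - s₀) • v)) s₀ = fderiv ℝ f x v := by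
  have hγ : HasDerivAt (fun s : ℝ => x + (s - s₀) • v) v s₀ := by
    simpa using (((hasDerivAt_id s₀).sub_const s₀).smul_const v).const_add x
  have hf' : HasFDerivAt f (fderiv ℝ f x) (x + (s₀ - s₀) • v) := by
    simpa using hf.hasFDerivAt
  have h2 : HasDerivAt (fun s => f (x + (s - s₀) • v)) (fderiv ℝ f x v) s₀ := by
    exact hf'.comp_hasDerivAt s₀ hγ
  exact h2.deriv

lemma curveP (x : Yn n) (m : Fin n) (s : ℝ) :
    ((Function.update x.1 m s, x.2.1, x.2.2) : Yn n) = x + (s - x.1 m) • eP m := by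
  ext k
  · rcases eq_or_ne k m with h | h <;>
      simp [eP, Function.update_apply, Pi.single_apply, h] <;> ring
  · simp [eP]
  · simp [eP]

lemma dPm_eq (m : Fin n) (f : Yn n → ℂ) (hf : Differentiable ℝ f) :
    dPm m f = Dv (eP m) f := by
  funext x
  have : (fun s => f (Function.update x.1 m s, x.2.1, x.2.2))
      = fun s => f (x + (s - x.1 m) • eP m) := by
    funext s; rw [curveP]
  rw [dPm, Dv, this, deriv_slice f x (eP m) (x.1 m) (hf x)]

lemma curveT (x : Yn n) (s : ℝ) :
    ((x.1, x.2.1, s) : Yn n) = x + (s - x.2.2) • eT := by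
  ext k <;> simp [eT]

lemma dTn_eq (f : Yn n → ℂ) (hf : Differentiable ℝ f) :
    dTn f = Dv eT f := by
  funext x
  have : (fun s => f (x.1, x.2.1, s)) = fun s => f (x + (s - x.2.2) • eT) := by
    funext s; rw [curveT]
  rw [dTn, Dv, this, deriv_slice f x eT x.2.2 (hf x)]

lemma Dv_smooth {f : Yn n → ℂ} (hf : ContDiff ℝ (⊤ : ℕ∞) f) (v : Yn n) :
    ContDiff ℝ (⊤ : ℕ∞) (Dv v f) :=
  (hf.fderiv_right (by simp)).clm_apply contDiff_const

lemma Dv_zero (v : Yn n) : Dv v (0 : Yn n → ℂ) = 0 := by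
  funext x
  simp [Dv, show (0 : Yn n → ℂ) = fun _ => (0 : ℂ) from rfl]

lemma Dv_const_mul {f : Yn n → ℂ} (hf : Differentiable ℝ f) (v : Yn n) (c : ℂ) :
    Dv v (fun x => c * f x) = fun x => c * Dv v f x := by
  funext x
  simp [Dv, fderiv_const_mul (hf x)]

lemma Dv_sub {f g : Yn n → ℂ} (hf : Differentiable ℝ f) (hg : Differentiable ℝ g) (v : Yn n) :
    Dv v (fun x => f x - g x) = fun x => Dv v f x - Dv v g x := by
  funext x
  simp [Dv, fderiv_fun_sub (hf x) (hg x)]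

lemma Dv_mul {f g : Yn n → ℂ} (hf : Differentiable ℝ f) (hg : Differentiable ℝ g) (v : Yn n) :
    Dv v (fun x => f x * g x) = fun x => f x * Dv v g x + g x * Dv v f x := by
  funext x
  simp [Dv, fderiv_fun_mul (hf x) (hg x), smul_eq_mul]

lemma Dv_comm {f : Yn n → ℂ} (hf : ContDiff ℝ (⊤ : ℕ∞) f) (v w : Yn n) :
    Dv v (Dv w f) = Dv w (Dv v f) := by
  have key : ∀ a b : Yn n, Dv a (Dv b f) = fun x => fderiv ℝ (fderiv ℝ f) x a b := by
    intro a b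
    funext x
    have hdf : DifferentiableAt ℝ (fderiv ℝ f) x :=
      ((hf.fderiv_right (m := 1) (by exact WithTop.coe_le_coe.mpr le_top)).differentiable (by simp)) x
    have h2 : Dv a (Dv b f) x
        = fderiv ℝ (fun y => (fderiv ℝ f y) b) x a := rfl
    rw [h2, fderiv_clm_apply hdf (differentiableAt_const b)]
    simp
  rw [key, key]
  funext x
  exact ((hf.contDiffAt).isSymmSndFDerivAt (by rw [minSmoothness_of_isRCLikeNormedField]; exact WithTop.coe_le_coe.mpr le_top)) v w

def eQ (m : Fin n) : Yn n := (0, Pi.single m 1, 0)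

lemma curveQ (x : Yn n) (m : Fin n) (s : ℝ) :
    ((x.1, Function.update x.2.1 m s, x.2.2) : Yn n) = x + (s - x.2.1 m) • eQ m := by
  ext k
  · simp [eQ]
  · rcases eq_or_ne k m with h | h <;>
      simp [eQ, Function.update_apply, Pi.single_apply, h] <;> ring
  · simp [eQ]

lemma dQm_eq (m : Fin n) (f : Yn n → ℂ) (hf : Differentiable ℝ f) :
    dQm m f = Dv (eQ m) f := by
  funext x
  have : (fun s => f (x.1, Function.update x.2.1 m s, x.2.2))
      = fun s => f (x + (s - x.2.1 m) • eQ m) := by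
    funext s; rw [curveQ]
  rw [dQm, Dv, this, deriv_slice f x (eQ m) (x.2.1 m) (hf x)]

/-- the coefficient `p_m / ħ` as a continuous linear map. -/
noncomputable def coefC (hb : ℝ) (m : Fin n) : Yn n →L[ℝ] ℂ :=
  ((hb⁻¹ : ℝ) • Complex.ofRealCLM).comp
    ((ContinuousLinearMap.proj m).comp (ContinuousLinearMap.fst ℝ (Fin n → ℝ) ((Fin n → ℝ) × ℝ)))

lemma coefC_apply (hb : ℝ) (m : Fin n) (x : Yn n) :
    coefC hb m x = ((x.1 m / hb : ℝ) : ℂ) := by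
  simp [coefC, div_eq_mul_inv, Complex.real_smul]
  ring

noncomputable def B' (hb : ℝ) (m : Fin n) (f : Yn n → ℂ) : Yn n → ℂ :=
  fun x => Dv (eQ m) f x - coefC hb m x * Dv eT f x

lemma B'_smooth {f : Yn n → ℂ} (hf : ContDiff ℝ (⊤ : ℕ∞) f) (hb : ℝ) (m : Fin n) :
    ContDiff ℝ (⊤ : ℕ∞) (B' hb m f) :=
  (Dv_smooth hf (eQ m)).sub ((coefC hb m).contDiff.mul (Dv_smooth hf eT))

lemma B'_iter_smooth {f : Yn n → ℂ} (hf : ContDiff ℝ (⊤ : ℕ∞) f) (hb : ℝ) (m : Fin n) (k : ℕ) :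
    ContDiff ℝ (⊤ : ℕ∞) ((B' hb m)^[k] f) := by
  induction k with
  | zero => exact hf
  | succ k ih => rw [Function.iterate_succ_apply']; exact B'_smooth ih hb m

lemma Bm_eq_B' {f : Yn n → ℂ} (hf : ContDiff ℝ (⊤ : ℕ∞) f) (hb : ℝ) (m : Fin n) :
    Bm hb m f = B' hb m f := by
  have hd := hf.differentiable (by simp)
  funext x
  show dQm m f x - _ = _
  rw [B', dQm_eq m f hd, ← dTn_eq f hd, ← coefC_apply]

lemma Bm_iter_eq {f : Yn n → ℂ} (hf : ContDiff ℝ (⊤ : ℕ∞) f) (hb : ℝ) (m : Fin n) (k : ℕ) :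
    (Bm hb m)^[k] f = (B' hb m)^[k] f := by
  induction k with
  | zero => rfl
  | succ k ih =>
    rw [Function.iterate_succ_apply', Function.iterate_succ_apply', ih,
      Bm_eq_B' (B'_iter_smooth hf hb m k)]

lemma Dv_clm (C : Yn n →L[ℝ] ℂ) (v : Yn n) :
    Dv v (fun x => C x) = fun _ => C v := by
  funext x
  simp [Dv, C.fderiv]

/-- master commutator formula -/
lemma Dv_B' {f : Yn n → ℂ} (hf : ContDiff ℝ (⊤ : ℕ∞) f) (hb : ℝ) (m : Fin n) (v : Yn n) :
    Dv v (B' hb m f) = fun x => B' hb m (Dv v f) x - coefC hb m v * Dv eT f x := by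
  have hd1 : Differentiable ℝ (Dv (eQ m) f) := (Dv_smooth hf (eQ m)).differentiable (by simp)
  have hdc : Differentiable ℝ (fun x : Yn n => coefC hb m x) := (coefC hb m).differentiable
  have hdT : Differentiable ℝ (Dv eT f) := (Dv_smooth hf eT).differentiable (by simp)
  have h0 : B' hb m f = fun x => Dv (eQ m) f x - (fun y => coefC hb m y * Dv eT f y) x := rfl
  rw [h0, Dv_sub hd1 (g := fun y => coefC hb m y * Dv eT f y) (hdc.mul hdT), Dv_mul hdc hdT, Dv_comm hf v (eQ m)]
  have h2 : Dv v (fun y : Yn n => coefC hb m y) = fun _ => coefC hb m v := Dv_clm _ v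
  have h3 : Dv v (Dv eT f) = Dv eT (Dv v f) := Dv_comm hf v eT
  rw [h2, h3]
  funext x
  show _ = Dv (eQ m) (Dv v f) x - coefC hb m x * Dv eT (Dv v f) x - _
  ring

lemma Dv_B'_comm {f : Yn n → ℂ} (hf : ContDiff ℝ (⊤ : ℕ∞) f) {hb : ℝ} {m : Fin n} {v : Yn n}
    (hv : coefC hb m v = 0) : Dv v (B' hb m f) = B' hb m (Dv v f) := by
  rw [Dv_B' hf hb m v, hv]
  simp

lemma Dv_B'_iter_comm {f : Yn n → ℂ} (hf : ContDiff ℝ (⊤ : ℕ∞) f) {hb : ℝ} {m : Fin n} {v : Yn n}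
    (hv : coefC hb m v = 0) (k : ℕ) :
    Dv v ((B' hb m)^[k] f) = (B' hb m)^[k] (Dv v f) := by
  induction k with
  | zero => rfl
  | succ k ih =>
    rw [Function.iterate_succ_apply', Function.iterate_succ_apply',
      Dv_B'_comm (B'_iter_smooth hf hb m k) hv, ih]

lemma coefC_eT (hb : ℝ) (m : Fin n) : coefC hb m eT = 0 := by
  simp [coefC_apply, eT]

lemma coefC_eP_self (hb : ℝ) (ℓ : Fin n) : coefC hb ℓ (eP ℓ) = ((1 / hb : ℝ) : ℂ) := by
  rw [coefC_apply]
  norm_num [eP]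

lemma coefC_eP_ne (hb : ℝ) {m ℓ : Fin n} (h : m ≠ ℓ) : coefC hb m (eP ℓ) = 0 := by
  rw [coefC_apply]
  simp [eP, Pi.single_apply, h.symm]

lemma B'_const_mul {f : Yn n → ℂ} (hf : ContDiff ℝ (⊤ : ℕ∞) f) (hb : ℝ) (m : Fin n) (c : ℂ) :
    B' hb m (fun x => c * f x) = fun x => c * B' hb m f x := by
  have hd := hf.differentiable (by simp)
  funext x
  rw [B', Dv_const_mul hd (eQ m) c, Dv_const_mul hd eT c]
  show c * _ - coefC hb m x * (c * _) = _
  rw [B']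
  ring

lemma B'_iter_const_mul {f : Yn n → ℂ} (hf : ContDiff ℝ (⊤ : ℕ∞) f) (hb : ℝ) (m : Fin n) (c : ℂ)
    (k : ℕ) : (B' hb m)^[k] (fun x => c * f x) = fun x => c * (B' hb m)^[k] f x := by
  induction k with
  | zero => rfl
  | succ k ih =>
    rw [Function.iterate_succ_apply', Function.iterate_succ_apply', ih,
      B'_const_mul (B'_iter_smooth hf hb m k) hb m c]

lemma B'_iter_eigen {f : Yn n → ℂ} (hf : ContDiff ℝ (⊤ : ℕ∞) f)
    (hT : Dv eT f = fun x => Complex.I * f x) (hb : ℝ) (m : Fin n) (k : ℕ) :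
    Dv eT ((B' hb m)^[k] f) = fun x => Complex.I * (B' hb m)^[k] f x := by
  rw [Dv_B'_iter_comm hf (coefC_eT hb m) k, hT, B'_iter_const_mul hf hb m _ k]

/-- The key commutation computation: `∂_{p_ℓ}` applied to `B_ℓ^[k]` of a polarized function. -/
lemma key_iter {g : Yn n → ℂ} (hg : ContDiff ℝ (⊤ : ℕ∞) g) (hb : ℝ) (ℓ : Fin n)
    (hT : Dv eT g = fun x => Complex.I * g x) (hP : Dv (eP ℓ) g = 0) (k : ℕ) :
    Dv (eP ℓ) ((B' hb ℓ)^[k] g)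
      = fun x => -(k : ℂ) * Complex.I / hb * (B' hb ℓ)^[k - 1] g x := by
  induction k with
  | zero =>
    simp only [Function.iterate_zero, id_eq, hP]
    funext x
    simp
  | succ k ih =>
    rw [Function.iterate_succ_apply',
      Dv_B' (B'_iter_smooth hg hb ℓ k) hb ℓ (eP ℓ), ih, coefC_eP_self,
      B'_iter_eigen hg hT hb ℓ k,
      B'_const_mul (B'_iter_smooth hg hb ℓ (k - 1)) hb ℓ _]
    funext x
    rcases Nat.eq_zero_or_pos k with hk | hk
    · subst hk
      push_cast
      simp
      ring
    · have hk1 : k - 1 + 1 = k := Nat.succ_pred_eq_of_pos hk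
      have : B' hb ℓ ((B' hb ℓ)^[k - 1] g) = (B' hb ℓ)^[k] g := by
        conv_rhs => rw [← hk1]
        rw [Function.iterate_succ_apply']
      rw [this]
      show _ * (_ : ℂ) - _ = _
      simp only [Nat.add_sub_cancel]
      push_cast
      ring

noncomputable def Bfold (hb : ℝ) (j : Fin n → ℕ) (L : List (Fin n)) (f : Yn n → ℂ) : Yn n → ℂ :=
  L.foldr (fun m g => (B' hb m)^[j m] g) f

lemma Bfold_smooth {f : Yn n → ℂ} (hf : ContDiff ℝ (⊤ : ℕ∞) f) (hb : ℝ) (j : Fin n → ℕ)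
    (L : List (Fin n)) : ContDiff ℝ (⊤ : ℕ∞) (Bfold hb j L f) := by
  induction L with
  | nil => exact hf
  | cons m L ih => exact B'_iter_smooth ih hb m (j m)

lemma Bmulti_eq_Bfold {f : Yn n → ℂ} (hf : ContDiff ℝ (⊤ : ℕ∞) f) (hb : ℝ) (j : Fin n → ℕ) :
    Bmulti hb j f = Bfold hb j (List.finRange n) f := by
  rw [Bmulti]
  generalize List.finRange n = L
  induction L with
  | nil => rfl
  | cons m L ih =>
    rw [List.foldr_cons, ih, Bm_iter_eq (Bfold_smooth hf hb j L) hb m (j m)]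
    rfl

lemma Bfold_const_mul {f : Yn n → ℂ} (hf : ContDiff ℝ (⊤ : ℕ∞) f) (hb : ℝ) (j : Fin n → ℕ)
    (L : List (Fin n)) (c : ℂ) :
    Bfold hb j L (fun x => c * f x) = fun x => c * Bfold hb j L f x := by
  induction L with
  | nil => rfl
  | cons m L ih =>
    show (B' hb m)^[j m] (Bfold hb j L fun x => c * f x) = _
    rw [ih, B'_iter_const_mul (Bfold_smooth hf hb j L) hb m c (j m)]
    rfl

lemma Bfold_eigen {f : Yn n → ℂ} (hf : ContDiff ℝ (⊤ : ℕ∞) f)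
    (hT : Dv eT f = fun x => Complex.I * f x) (hb : ℝ) (j : Fin n → ℕ) (L : List (Fin n)) :
    Dv eT (Bfold hb j L f) = fun x => Complex.I * Bfold hb j L f x := by
  induction L with
  | nil => exact hT
  | cons m L ih =>
    show Dv eT ((B' hb m)^[j m] (Bfold hb j L f)) = _
    rw [B'_iter_eigen (Bfold_smooth hf hb j L) ih hb m (j m)]
    rfl

lemma Dv_eP_Bfold_comm {f : Yn n → ℂ} (hf : ContDiff ℝ (⊤ : ℕ∞) f) (hb : ℝ) (j : Fin n → ℕ)
    {ℓ : Fin n} {L : List (Fin n)} (hL : ℓ ∉ L) :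
    Dv (eP ℓ) (Bfold hb j L f) = Bfold hb j L (Dv (eP ℓ) f) := by
  induction L with
  | nil => rfl
  | cons m L ih =>
    have hm : m ≠ ℓ := fun h => hL (h ▸ List.mem_cons_self)
    have hL' : ℓ ∉ L := fun h => hL (List.mem_cons_of_mem m h)
    show Dv (eP ℓ) ((B' hb m)^[j m] (Bfold hb j L f)) = _
    rw [Dv_B'_iter_comm (Bfold_smooth hf hb j L) (coefC_eP_ne hb hm) (j m), ih hL']
    rfl

lemma Bfold_update {f : Yn n → ℂ} (hb : ℝ) (j : Fin n → ℕ) (ℓ : Fin n) (c : ℕ)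
    {L : List (Fin n)} (hL : ℓ ∉ L) :
    Bfold hb (Function.update j ℓ c) L f = Bfold hb j L f := by
  induction L with
  | nil => rfl
  | cons m L ih =>
    have hm : m ≠ ℓ := fun h => hL (h ▸ List.mem_cons_self)
    have hL' : ℓ ∉ L := fun h => hL (List.mem_cons_of_mem m h)
    show (B' hb m)^[Function.update j ℓ c m] (Bfold hb (Function.update j ℓ c) L f) = _
    rw [Function.update_of_ne hm, ih hL']
    rfl

lemma finRange_split (ℓ : Fin n) :
    ∃ L1 L2 : List (Fin n), List.finRange n = L1 ++ ℓ :: L2 ∧ ℓ ∉ L1 ∧ ℓ ∉ L2 := by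
  obtain ⟨L1, L2, h⟩ := List.append_of_mem (List.mem_finRange ℓ)
  have hnd : (L1 ++ ℓ :: L2).Nodup := h ▸ List.nodup_finRange n
  rw [List.nodup_append'] at hnd
  exact ⟨L1, L2, h, fun hmem => hnd.2.2 hmem (List.mem_cons_self),
    (List.nodup_cons.mp hnd.2.1).1⟩

lemma B'_zero (hb : ℝ) (m : Fin n) : B' hb m (0 : Yn n → ℂ) = 0 := by
  funext x
  rw [B', Dv_zero, Dv_zero]
  simp

lemma B'_iter_zero (hb : ℝ) (m : Fin n) (k : ℕ) : (B' hb m)^[k] (0 : Yn n → ℂ) = 0 := by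
  induction k with
  | zero => rfl
  | succ k ih => rw [Function.iterate_succ_apply', ih, B'_zero]

lemma Bfold_zero (hb : ℝ) (j : Fin n → ℕ) (L : List (Fin n)) :
    Bfold hb j L (0 : Yn n → ℂ) = 0 := by
  induction L with
  | nil => rfl
  | cons m L ih =>
    show (B' hb m)^[j m] (Bfold hb j L 0) = 0
    rw [ih, B'_iter_zero]

/-- Main B-side lemma. -/
lemma Bmain {f : Yn n → ℂ} (hf : ContDiff ℝ (⊤ : ℕ∞) f)
    (hT : Dv eT f = fun x => Complex.I * f x) (hP : ∀ m : Fin n, Dv (eP m) f = 0)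
    (hb : ℝ) (j : Fin n → ℕ) (ℓ : Fin n) :
    Dv (eP ℓ) (Bfold hb j (List.finRange n) f)
      = fun x => -(j ℓ : ℂ) * Complex.I / hb *
          Bfold hb (Function.update j ℓ (j ℓ - 1)) (List.finRange n) f x := by
  obtain ⟨L1, L2, hsplit, h1, h2⟩ := finRange_split ℓ
  set g := Bfold hb j L2 f with hg_def
  have hg : ContDiff ℝ (⊤ : ℕ∞) g := Bfold_smooth hf hb j L2
  have hTg : Dv eT g = fun x => Complex.I * g x := Bfold_eigen hf hT hb j L2
  have hPg : Dv (eP ℓ) g = 0 := by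
    rw [hg_def, Dv_eP_Bfold_comm hf hb j h2, hP ℓ, Bfold_zero]
  have hdecomp : Bfold hb j (L1 ++ ℓ :: L2) f = Bfold hb j L1 ((B' hb ℓ)^[j ℓ] g) := by
    rw [Bfold, List.foldr_append]
    rfl
  have hdecomp' : Bfold hb (Function.update j ℓ (j ℓ - 1)) (L1 ++ ℓ :: L2) f
      = Bfold hb j L1 ((B' hb ℓ)^[j ℓ - 1] g) := by
    rw [Bfold, List.foldr_append]
    show Bfold hb _ L1 ((B' hb ℓ)^[Function.update j ℓ (j ℓ - 1) ℓ]
      (Bfold hb (Function.update j ℓ (j ℓ - 1)) L2 f)) = _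
    rw [Function.update_self, Bfold_update hb j ℓ _ h2, Bfold_update hb j ℓ _ h1]
  rw [hsplit, hdecomp, hdecomp',
    Dv_eP_Bfold_comm (B'_iter_smooth hg hb ℓ (j ℓ)) hb j h1,
    key_iter hg hb ℓ hTg hPg (j ℓ),
    Bfold_const_mul (B'_iter_smooth hg hb ℓ (j ℓ - 1)) hb j L1]

lemma Dv_iter_smooth {f : Yn n → ℂ} (hf : ContDiff ℝ (⊤ : ℕ∞) f) (w : Yn n) (k : ℕ) :
    ContDiff ℝ (⊤ : ℕ∞) ((Dv w)^[k] f) := by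
  induction k with
  | zero => exact hf
  | succ k ih => rw [Function.iterate_succ_apply']; exact Dv_smooth ih w

lemma Dv_iter_comm {f : Yn n → ℂ} (hf : ContDiff ℝ (⊤ : ℕ∞) f) (v w : Yn n) (k : ℕ) :
    Dv v ((Dv w)^[k] f) = (Dv w)^[k] (Dv v f) := by
  induction k with
  | zero => rfl
  | succ k ih =>
    rw [Function.iterate_succ_apply', Function.iterate_succ_apply',
      Dv_comm (Dv_iter_smooth hf w k) v w, ih]

noncomputable def Pfold (j : Fin n → ℕ) (L : List (Fin n)) (f : Yn n → ℂ) : Yn n → ℂ :=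
  L.foldr (fun m g => (Dv (eP m))^[j m] g) f

lemma Pfold_smooth {f : Yn n → ℂ} (hf : ContDiff ℝ (⊤ : ℕ∞) f) (j : Fin n → ℕ)
    (L : List (Fin n)) : ContDiff ℝ (⊤ : ℕ∞) (Pfold j L f) := by
  induction L with
  | nil => exact hf
  | cons m L ih => exact Dv_iter_smooth ih (eP m) (j m)

lemma dPm_iter_eq {f : Yn n → ℂ} (hf : ContDiff ℝ (⊤ : ℕ∞) f) (m : Fin n) (k : ℕ) :
    (dPm m)^[k] f = (Dv (eP m))^[k] f := by
  induction k with
  | zero => rfl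
  | succ k ih =>
    rw [Function.iterate_succ_apply', Function.iterate_succ_apply', ih,
      dPm_eq m _ ((Dv_iter_smooth hf (eP m) k).differentiable (by simp))]

lemma Pmulti_eq_Pfold {f : Yn n → ℂ} (hf : ContDiff ℝ (⊤ : ℕ∞) f) (j : Fin n → ℕ) :
    Pmulti j f = Pfold j (List.finRange n) f := by
  rw [Pmulti]
  generalize List.finRange n = L
  induction L with
  | nil => rfl
  | cons m L ih =>
    rw [List.foldr_cons, ih, dPm_iter_eq (Pfold_smooth hf j L) m (j m)]
    rfl

lemma Dv_eP_Pfold_comm {f : Yn n → ℂ} (hf : ContDiff ℝ (⊤ : ℕ∞) f) (j : Fin n → ℕ)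
    (ℓ : Fin n) (L : List (Fin n)) :
    Dv (eP ℓ) (Pfold j L f) = Pfold j L (Dv (eP ℓ) f) := by
  induction L with
  | nil => rfl
  | cons m L ih =>
    show Dv (eP ℓ) ((Dv (eP m))^[j m] (Pfold j L f)) = _
    rw [Dv_iter_comm (Pfold_smooth hf j L) (eP ℓ) (eP m) (j m), ih]
    rfl

lemma Pfold_update {f : Yn n → ℂ} (j : Fin n → ℕ) (ℓ : Fin n) (c : ℕ)
    {L : List (Fin n)} (hL : ℓ ∉ L) :
    Pfold (Function.update j ℓ c) L f = Pfold j L f := by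
  induction L with
  | nil => rfl
  | cons m L ih =>
    have hm : m ≠ ℓ := fun h => hL (h ▸ List.mem_cons_self)
    have hL' : ℓ ∉ L := fun h => hL (List.mem_cons_of_mem m h)
    show (Dv (eP m))^[Function.update j ℓ c m] (Pfold (Function.update j ℓ c) L f) = _
    rw [Function.update_of_ne hm, ih hL']
    rfl

/-- Main P-side lemma. -/
lemma Pmain {H : Yn n → ℂ} (hH : ContDiff ℝ (⊤ : ℕ∞) H) (j : Fin n → ℕ) (ℓ : Fin n) :
    Dv (eP ℓ) (Pfold j (List.finRange n) H)
      = Pfold (Function.update j ℓ (j ℓ + 1)) (List.finRange n) H := by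
  obtain ⟨L1, L2, hsplit, h1, h2⟩ := finRange_split ℓ
  set g := Pfold j L2 H with hg_def
  have hg : ContDiff ℝ (⊤ : ℕ∞) g := Pfold_smooth hH j L2
  have hdecomp : Pfold j (L1 ++ ℓ :: L2) H = Pfold j L1 ((Dv (eP ℓ))^[j ℓ] g) := by
    rw [Pfold, List.foldr_append]
    rfl
  have hdecomp' : Pfold (Function.update j ℓ (j ℓ + 1)) (L1 ++ ℓ :: L2) H
      = Pfold j L1 ((Dv (eP ℓ))^[j ℓ + 1] g) := by
    rw [Pfold, List.foldr_append]
    show Pfold _ L1 ((Dv (eP ℓ))^[Function.update j ℓ (j ℓ + 1) ℓ]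
      (Pfold (Function.update j ℓ (j ℓ + 1)) L2 H)) = _
    rw [Function.update_self, Pfold_update j ℓ _ h2, Pfold_update j ℓ _ h1]
  rw [hsplit, hdecomp, hdecomp',
    Dv_eP_Pfold_comm (Dv_iter_smooth hg (eP ℓ) (j ℓ)) j ℓ L1,
    ← Function.iterate_succ_apply' (Dv (eP ℓ)) (j ℓ) g]

/-- The normal quantum product of an observable `H` (polynomial in the momenta) and a
polarized wave function `Ψ` is again polarized. -/
theorem normal_product_preserves_polarization (hb : ℝ) (hhbar : 0 < hb)
    (n : ℕ) (hn : 1 ≤ n)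
    (H : Yn n → ℂ) (hH : ContDiff ℝ (⊤ : ℕ∞) H) (hHobs : dTn H = 0)
    (hHpoly : ∃ N : ℕ, ∀ j : Fin n → ℕ, N < ∑ m, j m → Pmulti j H = 0)
    (Ψ : Yn n → ℂ) (hΨ : ContDiff ℝ (⊤ : ℕ∞) Ψ)
    (hΨeq : dTn Ψ = fun x => Complex.I * Ψ x)
    (hΨpol : ∀ m : Fin n, dPm m Ψ = 0) :
    ∀ ℓ : Fin n,
      dPm ℓ (fun x => ∑' j : Fin n → ℕ,
        ((hb : ℂ) / Complex.I) ^ (∑ m, j m) *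
          (∏ m, (1 : ℂ) / (Nat.factorial (j m) : ℂ)) *
          (Pmulti j H x * Bmulti hb j Ψ x)) = 0 := by
  classical
  intro ℓ
  obtain ⟨N, hN⟩ := hHpoly
  -- basic data
  set c : (Fin n → ℕ) → ℂ := fun j =>
    ((hb : ℂ) / Complex.I) ^ (∑ m, j m) * ∏ m, (1 : ℂ) / (Nat.factorial (j m) : ℂ) with hc_def
  set PH : (Fin n → ℕ) → Yn n → ℂ := fun j => Pfold j (List.finRange n) H with hPH_def
  set BΨ : (Fin n → ℕ) → Yn n → ℂ := fun j => Bfold hb j (List.finRange n) Ψ with hBΨ_def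
  have hPHs : ∀ j, ContDiff ℝ (⊤ : ℕ∞) (PH j) := fun j => Pfold_smooth hH j _
  have hBΨs : ∀ j, ContDiff ℝ (⊤ : ℕ∞) (BΨ j) := fun j => Bfold_smooth hΨ hb j _
  have hPH0 : ∀ j : Fin n → ℕ, N < ∑ m, j m → PH j = 0 := by
    intro j hj
    rw [hPH_def]
    simp only []
    rw [← Pmulti_eq_Pfold hH j]
    exact hN j hj
  have hT : Dv eT Ψ = fun x => Complex.I * Ψ x := by
    rw [← dTn_eq Ψ (hΨ.differentiable (by simp))]; exact hΨeq
  have hPpol : ∀ m : Fin n, Dv (eP m) Ψ = 0 := by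
    intro m
    rw [← dPm_eq m Ψ (hΨ.differentiable (by simp))]; exact hΨpol m
  -- the index set
  set S : Finset (Fin n → ℕ) := Fintype.piFinset fun _ => Finset.range (N + 2) with hS_def
  -- shorthand operators on indices
  set σ : (Fin n → ℕ) → (Fin n → ℕ) := fun j => Function.update j ℓ (j ℓ + 1) with hσ_def
  set π : (Fin n → ℕ) → (Fin n → ℕ) := fun j => Function.update j ℓ (j ℓ - 1) with hπ_def
  have hσ_apply : ∀ (j : Fin n → ℕ) (m : Fin n), σ j m = if m = ℓ then j ℓ + 1 else j m := by
    intro j m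
    simp only [hσ_def]
    exact Function.update_apply j ℓ (j ℓ + 1) m
  have hπ_apply : ∀ (j : Fin n → ℕ) (m : Fin n), π j m = if m = ℓ then j ℓ - 1 else j m := by
    intro j m
    simp only [hπ_def]
    exact Function.update_apply j ℓ (j ℓ - 1) m
  -- step A: tsum is a finite sum
  have hout : ∀ j : Fin n → ℕ, j ∉ S → Pmulti j H = 0 := by
    intro j hj
    apply hN
    rw [hS_def, Fintype.mem_piFinset] at hj
    push_neg at hj
    obtain ⟨m, hm⟩ := hj
    rw [Finset.mem_range, not_lt] at hm
    calc N < N + 2 := by omega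
    _ ≤ j m := hm
    _ ≤ ∑ m', j m' := Finset.single_le_sum (fun _ _ => Nat.zero_le _) (Finset.mem_univ m)
  have heq : (fun x : Yn n => ∑' j : Fin n → ℕ,
        ((hb : ℂ) / Complex.I) ^ (∑ m, j m) *
          (∏ m, (1 : ℂ) / (Nat.factorial (j m) : ℂ)) *
          (Pmulti j H x * Bmulti hb j Ψ x))
      = fun x => ∑ j ∈ S, c j * (PH j x * BΨ j x) := by
    funext x
    rw [tsum_eq_sum (s := S) ?_]
    · apply Finset.sum_congr rfl
      intro j _
      rw [hc_def, hPH_def, hBΨ_def]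
      simp only []
      rw [← Pmulti_eq_Pfold hH j, ← Bmulti_eq_Bfold hΨ hb j]
    · intro j hj
      rw [hout j hj]
      simp
  rw [heq]
  -- step B: dPm = Dv, and push into the finite sum
  have hFs : ContDiff ℝ (⊤ : ℕ∞) (fun x => ∑ j ∈ S, c j * (PH j x * BΨ j x)) := by
    apply ContDiff.sum
    intro j _
    exact contDiff_const.mul ((hPHs j).mul (hBΨs j))
  rw [dPm_eq ℓ _ (hFs.differentiable (by simp))]
  have hterm_diff : ∀ j : Fin n → ℕ, Differentiable ℝ (fun x => c j * (PH j x * BΨ j x)) :=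
    fun j => (contDiff_const.mul ((hPHs j).mul (hBΨs j))).differentiable (by simp)
  have hsum_swap : Dv (eP ℓ) (fun x => ∑ j ∈ S, c j * (PH j x * BΨ j x))
      = fun x => ∑ j ∈ S, Dv (eP ℓ) (fun y => c j * (PH j y * BΨ j y)) x := by
    funext x
    rw [Dv, fderiv_fun_sum (fun j _ => (hterm_diff j) x)]
    simp [Dv]
  rw [hsum_swap]
  -- step C: per-term derivative
  have hterm : ∀ j : Fin n → ℕ, Dv (eP ℓ) (fun y => c j * (PH j y * BΨ j y))
      = fun x => c j * (PH j x * (-(j ℓ : ℂ) * Complex.I / hb * BΨ (π j) x)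
          + BΨ j x * PH (σ j) x) := by
    intro j
    rw [Dv_const_mul (((hPHs j).mul (hBΨs j)).differentiable (by simp)),
      Dv_mul ((hPHs j).differentiable (by simp)) ((hBΨs j).differentiable (by simp))]
    have h1 : Dv (eP ℓ) (PH j) = PH (σ j) := Pmain hH j ℓ
    have h2 : Dv (eP ℓ) (BΨ j) = fun x => -(j ℓ : ℂ) * Complex.I / hb * BΨ (π j) x :=
      Bmain hΨ hT hPpol hb j ℓ
    rw [h1, h2]
  simp only [hterm]
  -- step D: the sum telescopes
  funext x
  show (∑ j ∈ S, c j * (PH j x * (-(j ℓ : ℂ) * Complex.I / hb * BΨ (π j) x)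
      + BΨ j x * PH (σ j) x)) = 0
  -- G and F
  set G : (Fin n → ℕ) → ℂ := fun j => c j * (PH (σ j) x * BΨ j x) with hG_def
  set F : (Fin n → ℕ) → ℂ := fun j =>
    (c j * ((j ℓ : ℂ) * Complex.I / hb)) * (PH j x * BΨ (π j) x) with hF_def
  have hsplit : ∀ j, c j * (PH j x * (-(j ℓ : ℂ) * Complex.I / hb * BΨ (π j) x)
      + BΨ j x * PH (σ j) x) = G j - F j := by
    intro j
    rw [hG_def, hF_def]
    ring
  rw [Finset.sum_congr rfl (fun j _ => hsplit j), Finset.sum_sub_distrib]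
  -- key pointwise identity : F (σ j) = G j
  have hIne : (Complex.I : ℂ) ≠ 0 := Complex.I_ne_zero
  have hbne : ((hb : ℂ)) ≠ 0 := Complex.ofReal_ne_zero.mpr (ne_of_gt hhbar)
  have hσsum : ∀ j : Fin n → ℕ, (∑ m, σ j m) = (∑ m, j m) + 1 := by
    intro j
    rw [hσ_def]
    simp only []
    rw [Finset.sum_update_of_mem (Finset.mem_univ ℓ)]
    have h1 := Finset.add_sum_erase Finset.univ j (Finset.mem_univ ℓ)
    rw [← Finset.sdiff_singleton_eq_erase] at h1
    omega
  have hσprod : ∀ j : Fin n → ℕ,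
      (∏ m, (1 : ℂ) / (Nat.factorial (σ j m) : ℂ))
        = ((1 : ℂ) / (Nat.factorial (j ℓ + 1) : ℂ))
          * ∏ m ∈ Finset.univ.erase ℓ, (1 : ℂ) / (Nat.factorial (j m) : ℂ) := by
    intro j
    have : (fun m => (1 : ℂ) / (Nat.factorial (σ j m) : ℂ))
        = Function.update (fun m => (1 : ℂ) / (Nat.factorial (j m) : ℂ)) ℓ
            ((1 : ℂ) / (Nat.factorial (j ℓ + 1) : ℂ)) := by
      funext m
      rcases eq_or_ne m ℓ with h | h
      · subst h; simp [hσ_def]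
      · simp [hσ_def, Function.update_of_ne h]
    rw [this, Finset.prod_update_of_mem (Finset.mem_univ ℓ), Finset.sdiff_singleton_eq_erase]
  have hπσ : ∀ j : Fin n → ℕ, π (σ j) = j := by
    intro j
    funext m
    rcases eq_or_ne m ℓ with h | h
    · subst h; simp [hσ_def, hπ_def]
    · simp [hσ_def, hπ_def, Function.update_of_ne h]
  have hσℓ : ∀ j : Fin n → ℕ, σ j ℓ = j ℓ + 1 := by
    intro j; simp [hσ_def]
  have hkey : ∀ j : Fin n → ℕ, F (σ j) = G j := by
    intro j
    rw [hF_def, hG_def]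
    simp only []
    rw [hπσ j, hσℓ j]
    have hc : c (σ j) * ((↑(j ℓ + 1) : ℂ) * Complex.I / hb) = c j := by
      rw [hc_def]
      simp only []
      rw [hσsum j, hσprod j, pow_succ]
      have hprodc : (∏ m, (1 : ℂ) / (Nat.factorial (j m) : ℂ))
          = ((1 : ℂ) / (Nat.factorial (j ℓ) : ℂ))
            * ∏ m ∈ Finset.univ.erase ℓ, (1 : ℂ) / (Nat.factorial (j m) : ℂ) := by
        rw [← Finset.mul_prod_erase Finset.univ _ (Finset.mem_univ ℓ)]
      rw [hprodc]
      have hfac : ((Nat.factorial (j ℓ + 1) : ℂ)) = ((j ℓ : ℂ) + 1) * (Nat.factorial (j ℓ) : ℂ) := by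
        rw [Nat.factorial_succ]
        push_cast
        ring
      have hfacne : ((Nat.factorial (j ℓ) : ℂ)) ≠ 0 :=
        Nat.cast_ne_zero.mpr (Nat.factorial_ne_zero _)
      have hane : ((j ℓ : ℂ) + 1) ≠ 0 := Nat.cast_add_one_ne_zero (j ℓ)
      have hPne : (∏ m ∈ Finset.univ.erase ℓ, ((Nat.factorial (j m) : ℂ))) ≠ 0 :=
        Finset.prod_ne_zero_iff.mpr fun m _ => Nat.cast_ne_zero.mpr (Nat.factorial_ne_zero _)
      rw [hfac]
      push_cast
      field_simp
    rw [← hc]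
  -- reindexing
  have hinj : ∀ a ∈ S, ∀ b ∈ S, σ a = σ b → a = b := by
    intro a _ b _ hab
    funext m
    rcases eq_or_ne m ℓ with h | h
    · rw [h]
      have := congrFun hab ℓ
      rw [hσℓ a, hσℓ b] at this
      omega
    · have := congrFun hab m
      rwa [hσ_apply, hσ_apply, if_neg h, if_neg h] at this
  have himage : ∑ j ∈ S, G j = ∑ j ∈ S.image σ, F j := by
    rw [Finset.sum_image hinj]
    exact Finset.sum_congr rfl fun j _ => (hkey j).symm
  -- F vanishes where needed
  have hFzero_highdeg : ∀ j : Fin n → ℕ, N < ∑ m, j m → F j = 0 := by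
    intro j hj
    rw [hF_def]
    simp only []
    have : PH j = 0 := hPH0 j hj
    rw [this]
    simp
  have hFz1 : ∀ j ∈ S.image σ, j ∉ S → F j = 0 := by
    intro j hjim hjS
    rw [Finset.mem_image] at hjim
    obtain ⟨i, hiS, hij⟩ := hjim
    apply hFzero_highdeg
    -- j = σ i with i ∈ S but j ∉ S ⇒ j ℓ = i ℓ + 1 ≥ N + 2
    rw [hS_def, Fintype.mem_piFinset] at hjS
    push_neg at hjS
    obtain ⟨m, hm⟩ := hjS
    rw [Finset.mem_range, not_lt] at hm
    have hmsum : j m ≤ ∑ m', j m' :=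
      Finset.single_le_sum (fun _ _ => Nat.zero_le _) (Finset.mem_univ m)
    omega
  have hFz2 : ∀ j ∈ S, j ∉ S.image σ → F j = 0 := by
    intro j hjS hjim
    have hjℓ : j ℓ = 0 := by
      by_contra hℓ
      apply hjim
      rw [Finset.mem_image]
      refine ⟨π j, ?_, ?_⟩
      · rw [hS_def, Fintype.mem_piFinset] at hjS ⊢
        intro m
        rcases eq_or_ne m ℓ with h | h
        · rw [h, hπ_apply, if_pos rfl]
          have := hjS ℓ
          rw [Finset.mem_range] at this ⊢
          omega
        · rw [hπ_apply, if_neg h]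
          exact hjS m
      · funext m
        rcases eq_or_ne m ℓ with h | h
        · rw [h, hσ_apply, if_pos rfl, hπ_apply, if_pos rfl]
          omega
        · rw [hσ_apply, if_neg h, hπ_apply, if_neg h]
    rw [hF_def]
    simp only []
    rw [hjℓ]
    simp
  have hsame : ∑ j ∈ S.image σ, F j = ∑ j ∈ S, F j := by
    have h1 : ∑ j ∈ S.image σ, F j = ∑ j ∈ S ∪ S.image σ, F j :=
      Finset.sum_subset Finset.subset_union_right
        (fun j hj hj2 => hFz2 j (by
          rcases Finset.mem_union.mp hj with h | h
          · exact h
          · exact absurd h hj2) hj2)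
    have h2 : ∑ j ∈ S, F j = ∑ j ∈ S ∪ S.image σ, F j :=
      Finset.sum_subset Finset.subset_union_left
        (fun j hj hj2 => hFz1 j (by
          rcases Finset.mem_union.mp hj with h | h
          · exact absurd h hj2
          · exact h) hj2)
    rw [h1, h2]
  rw [himage, hsame]
  ring
end

section
/- (Proposition: module property of the prequantum product.) Let F, G : ℝ^{2n+1} → ℂ be smooth with ∂_θ F = ∂_θ G = 0, each polynomial in the momenta (all iterated p-derivatives of sufficiently high total order vanish), and let h : ℝ^{2n+1} → ℂ be any smooth function. Define the normal star product F ⋆ G := Σ_{j∈ℕⁿ} (ħ/i)^{|j|} (∏_m 1/j_m!) (∂_{p₁}^{j₁}⋯∂_{p_n}^{j_n} F)·(∂_{q₁}^{j₁}⋯∂_{q_n}^{j_n} G) and the prequantum product F • h := Σ_{j∈ℕⁿ} (ħ/i)^{|j|} (∏_m 1/j_m!) (∂_{p₁}^{j₁}⋯∂_{p_n}^{j_n} F)·(B₁^{j₁}⋯B_n^{j_n} h) (both finite sums). Then (F ⋆ G) • h = F • (G • h). -/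
open Complex

/-- The normal star product of two observables. -/
noncomputable def starN (hb : ℝ) {n : ℕ} (F G : Yn n → ℂ) : Yn n → ℂ :=
  fun x => ∑' j : Fin n → ℕ,
    ((hb : ℂ) / Complex.I) ^ (∑ m, j m) *
      (∏ m, (1 : ℂ) / (Nat.factorial (j m) : ℂ)) *
      (Pmulti j F x * Qmulti j G x)

/-- The prequantum product of an observable with a function on the bundle. -/
noncomputable def bulletN (hb : ℝ) {n : ℕ} (F h : Yn n → ℂ) : Yn n → ℂ :=
  fun x => ∑' j : Fin n → ℕ,
    ((hb : ℂ) / Complex.I) ^ (∑ m, j m) *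
      (∏ m, (1 : ℂ) / (Nat.factorial (j m) : ℂ)) *
      (Pmulti j F x * Bmulti hb j h x)

namespace Preq
variable {n : ℕ}

abbrev Sm {n : ℕ} (f : Yn n → ℂ) : Prop := ContDiff ℝ (⊤ : ℕ∞) f

lemma Sm.diff {f : Yn n → ℂ} (hf : Sm f) : Differentiable ℝ f := hf.differentiable (by simp)

noncomputable def DD (v : Yn n) (f : Yn n → ℂ) : Yn n → ℂ := fun x => fderiv ℝ f x v

lemma DD.smooth {v : Yn n} {f : Yn n → ℂ} (hf : Sm f) : Sm (DD v f) :=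
  (hf.fderiv_right (by simp)).clm_apply contDiff_const

lemma DD.comm {v w : Yn n} {f : Yn n → ℂ} (hf : Sm f) : DD v (DD w f) = DD w (DD v f) := by
  funext x
  have hd : ∀ y, HasFDerivAt f (fderiv ℝ f y) y := fun y => (hf.diff y).hasFDerivAt
  have h2 : DifferentiableAt ℝ (fderiv ℝ f) x :=
    ((hf.fderiv_right (m := (⊤ : ℕ∞)) (by simp)).differentiable (by simp)) x
  have hsymm := second_derivative_symmetric hd h2.hasFDerivAt
  have h3 : ∀ u : Yn n, fderiv ℝ (fun y => fderiv ℝ f y u) x = (fderiv ℝ (fderiv ℝ f) x).flip u := by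
    intro u
    simpa using fderiv_clm_apply (c := fderiv ℝ f) (u := fun _ => u) h2 (differentiableAt_const u)
  show fderiv ℝ (fun y => fderiv ℝ f y w) x v = fderiv ℝ (fun y => fderiv ℝ f y v) x w
  rw [h3, h3]
  simpa using hsymm v w

lemma DD.mul {v : Yn n} {f g : Yn n → ℂ} (hf : Differentiable ℝ f) (hg : Differentiable ℝ g) :
    DD v (fun x => f x * g x) = fun x => DD v f x * g x + f x * DD v g x := by
  funext x
  simp only [DD, fderiv_fun_mul (hf x) (hg x)]
  simp [smul_eq_mul]; ring

lemma DD.linear {v : Yn n} {f g : Yn n → ℂ} (c : ℂ) (hf : Differentiable ℝ f)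
    (hg : Differentiable ℝ g) :
    DD v (fun x => c * f x + g x) = fun x => c * DD v f x + DD v g x := by
  funext x
  rw [DD, fderiv_fun_add ((hf x).const_mul c) (hg x), fderiv_const_mul (hf x) c]
  simp [DD]

lemma DD.zero {v : Yn n} : DD v (0 : Yn n → ℂ) = 0 := by
  have h0 : (0 : Yn n → ℂ) = fun _ => (0:ℂ) := rfl
  funext x; simp [DD, h0]

noncomputable def vP (m : Fin n) : Yn n := (Pi.single m 1, 0, 0)
noncomputable def vQ (m : Fin n) : Yn n := (0, Pi.single m 1, 0)
noncomputable def vT : Yn n := ((0:Fin n → ℝ), (0:Fin n → ℝ), (1:ℝ))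

lemma hasDerivAt_line (b v : Yn n) (t : ℝ) : HasDerivAt (fun s : ℝ => b + s • v) v t := by
  simpa using ((hasDerivAt_id t).smul_const v).const_add b

lemma deriv_comp_line {f : Yn n → ℂ} {x : Yn n} (hf : DifferentiableAt ℝ f x) (b v : Yn n)
    (t : ℝ) (hbt : b + t • v = x) : deriv (fun s => f (b + s • v)) t = DD v f x := by
  have hF : HasFDerivAt f (fderiv ℝ f x) (b + t • v) := hbt ▸ hf.hasFDerivAt
  have H := hF.comp_hasDerivAt t (hasDerivAt_line b v t)
  simpa [Function.comp_def, hbt, DD] using H.deriv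

lemma dPm_eq_DD {m : Fin n} {f : Yn n → ℂ} (hf : Differentiable ℝ f) :
    dPm m f = DD (vP m) f := by
  funext x
  have key : ∀ s : ℝ, ((Function.update x.1 m s, x.2.1, x.2.2) : Yn n)
      = ((Function.update x.1 m 0, x.2.1, x.2.2) : Yn n) + s • vP m := by
    intro s
    refine Prod.ext ?_ (Prod.ext ?_ ?_) <;> simp [vP]
    funext i
    by_cases h : i = m <;> simp [Function.update_apply, Pi.single_apply, h]
  have hbt : ((Function.update x.1 m 0, x.2.1, x.2.2) : Yn n) + (x.1 m) • vP m = x := by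
    refine Prod.ext ?_ (Prod.ext ?_ ?_) <;> simp [vP]
    funext i
    by_cases h : i = m <;> simp [Function.update_apply, Pi.single_apply, h]
  have keyf : (fun s : ℝ => f ((Function.update x.1 m s, x.2.1, x.2.2) : Yn n))
      = fun s => f (((Function.update x.1 m 0, x.2.1, x.2.2) : Yn n) + s • vP m) := by
    funext s; rw [key s]
  rw [dPm, keyf, deriv_comp_line (hf x) _ _ _ hbt]

lemma dQm_eq_DD {m : Fin n} {f : Yn n → ℂ} (hf : Differentiable ℝ f) :
    dQm m f = DD (vQ m) f := by
  funext x
  have key : ∀ s : ℝ, ((x.1, Function.update x.2.1 m s, x.2.2) : Yn n)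
      = ((x.1, Function.update x.2.1 m 0, x.2.2) : Yn n) + s • vQ m := by
    intro s
    refine Prod.ext ?_ (Prod.ext ?_ ?_) <;> simp [vQ]
    funext i
    by_cases h : i = m <;> simp [Function.update_apply, Pi.single_apply, h]
  have hbt : ((x.1, Function.update x.2.1 m 0, x.2.2) : Yn n) + (x.2.1 m) • vQ m = x := by
    refine Prod.ext ?_ (Prod.ext ?_ ?_) <;> simp [vQ]
    funext i
    by_cases h : i = m <;> simp [Function.update_apply, Pi.single_apply, h]
  have keyf : (fun s : ℝ => f ((x.1, Function.update x.2.1 m s, x.2.2) : Yn n))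
      = fun s => f (((x.1, Function.update x.2.1 m 0, x.2.2) : Yn n) + s • vQ m) := by
    funext s; rw [key s]
  rw [dQm, keyf, deriv_comp_line (hf x) _ _ _ hbt]

lemma dTn_eq_DD {f : Yn n → ℂ} (hf : Differentiable ℝ f) :
    dTn f = DD vT f := by
  funext x
  have key : ∀ s : ℝ, ((x.1, x.2.1, s) : Yn n)
      = ((x.1, x.2.1, 0) : Yn n) + s • vT := by
    intro s; refine Prod.ext ?_ (Prod.ext ?_ ?_) <;> simp [vT]
  have hbt : ((x.1, x.2.1, 0) : Yn n) + (x.2.2) • vT = x := by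
    refine Prod.ext ?_ (Prod.ext ?_ ?_) <;> simp [vT]
  have keyf : (fun s : ℝ => f ((x.1, x.2.1, s) : Yn n))
      = fun s => f (((x.1, x.2.1, 0) : Yn n) + s • vT) := by
    funext s; rw [key s]
  rw [dTn, keyf, deriv_comp_line (hf x) _ _ _ hbt]

end Preq

namespace Preq
variable {n : ℕ}

/-- the coefficient function `x ↦ p_m/ħ` as a complex valued function -/
noncomputable def cfL (hb : ℝ) (m : Fin n) : Yn n →L[ℝ] ℂ :=
  ((hb)⁻¹ : ℂ) • (Complex.ofRealCLM.comp
    ((ContinuousLinearMap.proj m).comp (ContinuousLinearMap.fst ℝ (Fin n → ℝ) ((Fin n → ℝ) × ℝ))))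

lemma cfL_apply (hb : ℝ) (m : Fin n) (x : Yn n) :
    cfL hb m x = ((x.1 m / hb : ℝ) : ℂ) := by
  simp [cfL, div_eq_inv_mul]

lemma cfL_smooth (hb : ℝ) (m : Fin n) : Sm (fun x : Yn n => ((x.1 m / hb : ℝ) : ℂ)) := by
  have : (fun x : Yn n => ((x.1 m / hb : ℝ) : ℂ)) = fun x => cfL hb m x := by
    funext x; rw [cfL_apply]
  rw [this]; exact (cfL hb m).contDiff

lemma DD_cf (hb : ℝ) (m : Fin n) (v : Yn n) :
    DD v (fun x : Yn n => ((x.1 m / hb : ℝ) : ℂ)) = fun _ => cfL hb m v := by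
  have : (fun x : Yn n => ((x.1 m / hb : ℝ) : ℂ)) = fun x => cfL hb m x := by
    funext x; rw [cfL_apply]
  funext x; rw [DD, this, ContinuousLinearMap.fderiv]

lemma cfL_vQ (hb : ℝ) (m l : Fin n) : cfL hb m (vQ l) = 0 := by simp [cfL, vQ]
lemma cfL_vT (hb : ℝ) (m : Fin n) : cfL hb m (vT) = 0 := by simp [cfL, vT]

/-- Bm in terms of DD -/
lemma Bm_eq_DD (hb : ℝ) {m : Fin n} {f : Yn n → ℂ} (hf : Differentiable ℝ f) :
    Bm hb m f = fun x => DD (vQ m) f x - ((x.1 m / hb : ℝ) : ℂ) * DD vT f x := by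
  funext x
  rw [Bm, dQm_eq_DD hf, dTn_eq_DD hf]

/-- smoothness preservation -/
lemma dPm_smooth {m : Fin n} {f : Yn n → ℂ} (hf : Sm f) : Sm (dPm m f) := by
  rw [dPm_eq_DD hf.diff]; exact DD.smooth hf
lemma dQm_smooth {m : Fin n} {f : Yn n → ℂ} (hf : Sm f) : Sm (dQm m f) := by
  rw [dQm_eq_DD hf.diff]; exact DD.smooth hf
lemma dTn_smooth {f : Yn n → ℂ} (hf : Sm f) : Sm (dTn f) := by
  rw [dTn_eq_DD hf.diff]; exact DD.smooth hf
lemma Bm_smooth (hb : ℝ) {m : Fin n} {f : Yn n → ℂ} (hf : Sm f) : Sm (Bm hb m f) := by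
  rw [Bm_eq_DD hb hf.diff]
  exact (DD.smooth hf).sub ((cfL_smooth hb m).mul (DD.smooth hf))

/-- linearity -/
lemma dPm_linear {m : Fin n} {f g : Yn n → ℂ} (c : ℂ) (hf : Sm f) (hg : Sm g) :
    dPm m (fun x => c * f x + g x) = fun x => c * dPm m f x + dPm m g x := by
  rw [dPm_eq_DD (((hf.diff).const_mul c).fun_add hg.diff), dPm_eq_DD hf.diff,
    dPm_eq_DD hg.diff]
  exact DD.linear c hf.diff hg.diff
lemma dQm_linear {m : Fin n} {f g : Yn n → ℂ} (c : ℂ) (hf : Sm f) (hg : Sm g) :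
    dQm m (fun x => c * f x + g x) = fun x => c * dQm m f x + dQm m g x := by
  rw [dQm_eq_DD (((hf.diff).const_mul c).fun_add hg.diff), dQm_eq_DD hf.diff,
    dQm_eq_DD hg.diff]
  exact DD.linear c hf.diff hg.diff
lemma dTn_linear {f g : Yn n → ℂ} (c : ℂ) (hf : Sm f) (hg : Sm g) :
    dTn (fun x => c * f x + g x) = fun x => c * dTn f x + dTn g x := by
  rw [dTn_eq_DD (((hf.diff).const_mul c).fun_add hg.diff), dTn_eq_DD hf.diff,
    dTn_eq_DD hg.diff]
  exact DD.linear c hf.diff hg.diff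
lemma Bm_linear (hb : ℝ) {m : Fin n} {f g : Yn n → ℂ} (c : ℂ) (hf : Sm f) (hg : Sm g) :
    Bm hb m (fun x => c * f x + g x) = fun x => c * Bm hb m f x + Bm hb m g x := by
  funext x
  rw [Bm, Bm, Bm, congrFun (dQm_linear c hf hg) x, congrFun (dTn_linear c hf hg) x]
  ring

/-- zero -/
lemma dPm_zero {m : Fin n} : dPm m (0 : Yn n → ℂ) = 0 := by
  rw [dPm_eq_DD (m := m) (f := (0 : Yn n → ℂ)) (by exact differentiable_const 0)]
  exact DD.zero
lemma dQm_zero {m : Fin n} : dQm m (0 : Yn n → ℂ) = 0 := by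
  rw [dQm_eq_DD (m := m) (f := (0 : Yn n → ℂ)) (by exact differentiable_const 0)]
  exact DD.zero
lemma dTn_zero : dTn (0 : Yn n → ℂ) = 0 := by
  rw [dTn_eq_DD (f := (0 : Yn n → ℂ)) (by exact differentiable_const 0)]
  exact DD.zero
lemma Bm_zero (hb : ℝ) {m : Fin n} : Bm hb m (0 : Yn n → ℂ) = 0 := by
  funext x; rw [Bm, congrFun dQm_zero, congrFun dTn_zero]; simp

/-- commutations -/
lemma dPm_dPm_comm {a b : Fin n} {f : Yn n → ℂ} (hf : Sm f) :
    dPm a (dPm b f) = dPm b (dPm a f) := by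
  rw [dPm_eq_DD hf.diff, dPm_eq_DD hf.diff, dPm_eq_DD (DD.smooth hf).diff,
    dPm_eq_DD (DD.smooth hf).diff, DD.comm hf]
lemma dPm_dQm_comm {a b : Fin n} {f : Yn n → ℂ} (hf : Sm f) :
    dPm a (dQm b f) = dQm b (dPm a f) := by
  rw [dQm_eq_DD hf.diff, dPm_eq_DD hf.diff, dPm_eq_DD (DD.smooth hf).diff,
    dQm_eq_DD (DD.smooth hf).diff, DD.comm hf]
lemma dQm_dQm_comm {a b : Fin n} {f : Yn n → ℂ} (hf : Sm f) :
    dQm a (dQm b f) = dQm b (dQm a f) := by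
  rw [dQm_eq_DD hf.diff, dQm_eq_DD hf.diff, dQm_eq_DD (DD.smooth hf).diff,
    dQm_eq_DD (DD.smooth hf).diff, DD.comm hf]
lemma dTn_dPm_comm {a : Fin n} {f : Yn n → ℂ} (hf : Sm f) :
    dTn (dPm a f) = dPm a (dTn f) := by
  rw [dPm_eq_DD hf.diff, dTn_eq_DD hf.diff, dTn_eq_DD (DD.smooth hf).diff,
    dPm_eq_DD (DD.smooth hf).diff, DD.comm hf]
lemma dTn_dQm_comm {a : Fin n} {f : Yn n → ℂ} (hf : Sm f) :
    dTn (dQm a f) = dQm a (dTn f) := by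
  rw [dQm_eq_DD hf.diff, dTn_eq_DD hf.diff, dTn_eq_DD (DD.smooth hf).diff,
    dQm_eq_DD (DD.smooth hf).diff, DD.comm hf]

lemma DD_cf_mul (hb : ℝ) (m : Fin n) (v : Yn n) (hv : cfL hb m v = 0) {g : Yn n → ℂ}
    (hg : Sm g) :
    DD v (fun x => ((x.1 m / hb : ℝ) : ℂ) * g x) = fun x => ((x.1 m / hb : ℝ) : ℂ) * DD v g x := by
  rw [DD.mul (cfL_smooth hb m).diff hg.diff, DD_cf]
  funext x; simp [hv]

lemma Bm_Bm_comm (hb : ℝ) {a b : Fin n} {f : Yn n → ℂ} (hf : Sm f) :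
    Bm hb a (Bm hb b f) = Bm hb b (Bm hb a f) := by
  have expand : ∀ (a b : Fin n),
      Bm hb a (Bm hb b f) = fun x =>
        DD (vQ a) (DD (vQ b) f) x - ((x.1 b / hb : ℝ) : ℂ) * DD (vQ a) (DD vT f) x
          - ((x.1 a / hb : ℝ) : ℂ) * DD vT (DD (vQ b) f) x
          + ((x.1 a / hb : ℝ) : ℂ) * (((x.1 b / hb : ℝ) : ℂ) * DD vT (DD vT f) x) := by
    intro a b
    have hBb : Bm hb b f = fun x => DD (vQ b) f x - ((x.1 b / hb : ℝ) : ℂ) * DD vT f x :=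
      Bm_eq_DD hb hf.diff
    have hsm : Sm (Bm hb b f) := Bm_smooth hb hf
    rw [Bm_eq_DD hb hsm.diff, hBb]
    have h1 : ∀ v : Yn n, cfL hb b v = 0 →
        DD v (fun x => DD (vQ b) f x - ((x.1 b / hb : ℝ) : ℂ) * DD vT f x)
          = fun x => DD v (DD (vQ b) f) x - ((x.1 b / hb : ℝ) : ℂ) * DD v (DD vT f) x := by
      intro v hv
      have e : (fun x => DD (vQ b) f x - ((x.1 b / hb : ℝ) : ℂ) * DD vT f x)
          = fun x => (-1 : ℂ) * (((x.1 b / hb : ℝ) : ℂ) * DD vT f x) + DD (vQ b) f x := by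
        funext x; ring
      rw [e, DD.linear (-1) (Sm.diff ((cfL_smooth hb b).mul (DD.smooth hf)))
        (Sm.diff (DD.smooth hf)), DD_cf_mul hb b v hv (DD.smooth hf)]
      funext x; ring
    rw [h1 (vQ a) (cfL_vQ hb b a), h1 vT (cfL_vT hb b)]
    funext x; ring
  rw [expand a b, expand b a]
  have c1 := congrFun (DD.comm (v := vQ a) (w := vQ b) hf)
  have c2 := congrFun (DD.comm (v := vQ a) (w := vT) hf)
  have c3 := congrFun (DD.comm (v := vQ b) (w := vT) hf)
  funext x
  rw [c1 x, c2 x, ← c3 x]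
  ring

end Preq

namespace Preq
variable {n : ℕ}

/-- observables: smooth and θ-independent -/
def Obs (f : Yn n → ℂ) : Prop := Sm f ∧ dTn f = 0

lemma Obs.sm {f : Yn n → ℂ} (hf : Obs f) : Sm f := hf.1

lemma Obs.dQ {m : Fin n} {f : Yn n → ℂ} (hf : Obs f) : Obs (dQm m f) :=
  ⟨dQm_smooth hf.1, by rw [dTn_dQm_comm hf.1, hf.2, dQm_zero]⟩

lemma Obs.dP {m : Fin n} {f : Yn n → ℂ} (hf : Obs f) : Obs (dPm m f) :=
  ⟨dPm_smooth hf.1, by rw [dTn_dPm_comm hf.1, hf.2, dPm_zero]⟩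

lemma Obs.Bm_eq (hb : ℝ) {m : Fin n} {f : Yn n → ℂ} (hf : Obs f) : Bm hb m f = dQm m f := by
  funext x; rw [Bm, hf.2]; simp

/-- product rules -/
lemma dPm_mul {m : Fin n} {u v : Yn n → ℂ} (hu : Sm u) (hv : Sm v) :
    dPm m (fun x => u x * v x) = fun x => dPm m u x * v x + u x * dPm m v x := by
  rw [dPm_eq_DD (hu.diff.fun_mul hv.diff), dPm_eq_DD hu.diff, dPm_eq_DD hv.diff]
  exact DD.mul hu.diff hv.diff
lemma dQm_mul {m : Fin n} {u v : Yn n → ℂ} (hu : Sm u) (hv : Sm v) :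
    dQm m (fun x => u x * v x) = fun x => dQm m u x * v x + u x * dQm m v x := by
  rw [dQm_eq_DD (hu.diff.fun_mul hv.diff), dQm_eq_DD hu.diff, dQm_eq_DD hv.diff]
  exact DD.mul hu.diff hv.diff
lemma dTn_mul {u v : Yn n → ℂ} (hu : Sm u) (hv : Sm v) :
    dTn (fun x => u x * v x) = fun x => dTn u x * v x + u x * dTn v x := by
  rw [dTn_eq_DD (hu.diff.fun_mul hv.diff), dTn_eq_DD hu.diff, dTn_eq_DD hv.diff]
  exact DD.mul hu.diff hv.diff

lemma Bm_mul (hb : ℝ) {m : Fin n} {u v : Yn n → ℂ} (hu : Obs u) (hv : Sm v) :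
    Bm hb m (fun x => u x * v x) = fun x => dQm m u x * v x + u x * Bm hb m v x := by
  funext x
  rw [Bm, congrFun (dQm_mul hu.1 hv) x, congrFun (dTn_mul hu.1 hv) x, congrFun hu.2 x, Bm]
  simp; ring

/-! ### generic iterated operator machinery -/

variable {T A B : Fin n → (Yn n → ℂ) → Yn n → ℂ} {CL : (Yn n → ℂ) → Prop}

def MM (T : Fin n → (Yn n → ℂ) → Yn n → ℂ) (L : List (Fin n)) (j : Fin n → ℕ)
    (f : Yn n → ℂ) : Yn n → ℂ := L.foldr (fun m g => (T m)^[j m] g) f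

lemma MM_nil (T) (j : Fin n → ℕ) (f : Yn n → ℂ) : MM T [] j f = f := rfl
lemma MM_cons (T) (l : Fin n) (L : List (Fin n)) (j : Fin n → ℕ) (f : Yn n → ℂ) :
    MM T (l::L) j f = (T l)^[j l] (MM T L j f) := rfl

lemma iter_pres {Aop : (Yn n → ℂ) → Yn n → ℂ} (hA : ∀ f, CL f → CL (Aop f)) (k : ℕ)
    {f : Yn n → ℂ} (hf : CL f) : CL (Aop^[k] f) := by
  induction k with
  | zero => exact hf
  | succ k ih => rw [Function.iterate_succ_apply']; exact hA _ ih

lemma MM_pres (hT : ∀ m f, CL f → CL (T m f)) (L : List (Fin n)) (j : Fin n → ℕ)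
    {f : Yn n → ℂ} (hf : CL f) : CL (MM T L j f) := by
  induction L with
  | nil => exact hf
  | cons l L ih => exact iter_pres (hT l) (j l) ih

lemma MM_congr (L : List (Fin n)) {j j' : Fin n → ℕ} (h : ∀ m ∈ L, j m = j' m)
    (f : Yn n → ℂ) : MM T L j f = MM T L j' f := by
  induction L with
  | nil => rfl
  | cons l L ih =>
      rw [MM_cons, MM_cons, h l (List.mem_cons_self),
        ih (fun m hm => h m (List.mem_cons_of_mem l hm))]

lemma iter_comm {Aop Bop : (Yn n → ℂ) → Yn n → ℂ}
    (hcomm : ∀ f, CL f → Aop (Bop f) = Bop (Aop f)) (hBpres : ∀ f, CL f → CL (Bop f))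
    (k : ℕ) {f : Yn n → ℂ} (hf : CL f) : Aop (Bop^[k] f) = Bop^[k] (Aop f) := by
  induction k with
  | zero => rfl
  | succ k ih =>
      rw [Function.iterate_succ_apply', Function.iterate_succ_apply',
        hcomm _ (iter_pres hBpres k hf), ih]

lemma comm_MM {Aop : (Yn n → ℂ) → Yn n → ℂ}
    (hcomm : ∀ m f, CL f → Aop (T m f) = T m (Aop f)) (hTpres : ∀ m f, CL f → CL (T m f))
    (L : List (Fin n)) (j : Fin n → ℕ) {f : Yn n → ℂ} (hf : CL f) :
    Aop (MM T L j f) = MM T L j (Aop f) := by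
  induction L with
  | nil => rfl
  | cons l L ih =>
      rw [MM_cons, MM_cons,
        iter_comm (hcomm l) (hTpres l) (j l) (MM_pres hTpres L j hf), ih]

lemma MM_add (hTpres : ∀ m f, CL f → CL (T m f))
    (hTcomm : ∀ m l f, CL f → T m (T l f) = T l (T m f))
    (L : List (Fin n)) (a b : Fin n → ℕ) {f : Yn n → ℂ} (hf : CL f) :
    MM T L (a + b) f = MM T L a (MM T L b f) := by
  induction L with
  | nil => rfl
  | cons l L ih =>
      have hIC : ∀ (k : ℕ) (g : Yn n → ℂ), CL g →
          (T l)^[k] (MM T L a g) = MM T L a ((T l)^[k] g) := by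
        intro k g hg
        exact comm_MM (T := T) (CL := CL) (Aop := (T l)^[k])
          (fun m f' hf' => (iter_comm (hTcomm m l) (hTpres l) k hf').symm) hTpres L a hg
      rw [MM_cons, MM_cons, MM_cons, ih,
        show (a + b) l = a l + b l from rfl, Function.iterate_add_apply,
        hIC (b l) (MM T L b f) (MM_pres hTpres L b hf)]

end Preq

namespace Preq
variable {n : ℕ}
variable {T : Fin n → (Yn n → ℂ) → Yn n → ℂ} {CL : (Yn n → ℂ) → Prop}

lemma Sm_sum {ι : Type*} (s : Finset ι) (c : ι → ℂ) (g : ι → Yn n → ℂ)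
    (hg : ∀ i ∈ s, Sm (g i)) : Sm (fun x => ∑ i ∈ s, c i * g i x) :=
  ContDiff.sum fun i hi => contDiff_const.mul (hg i hi)

lemma op_sum (Aop : (Yn n → ℂ) → Yn n → ℂ) (hA0 : Aop 0 = 0)
    (hAlin : ∀ (c : ℂ) u v, Sm u → Sm v →
      Aop (fun x => c * u x + v x) = fun x => c * Aop u x + Aop v x)
    {ι : Type*} (s : Finset ι) (c : ι → ℂ) (g : ι → Yn n → ℂ)
    (hg : ∀ i ∈ s, Sm (g i)) :
    Aop (fun x => ∑ i ∈ s, c i * g i x) = fun x => ∑ i ∈ s, c i * Aop (g i) x := by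
  classical
  induction s using Finset.induction_on with
  | empty => simp only [Finset.sum_empty]; exact hA0
  | insert a s hx ih =>
      have h1 : (fun x => ∑ i ∈ insert a s, c i * g i x)
          = fun x => c a * g a x + ∑ i ∈ s, c i * g i x := by
        funext x; rw [Finset.sum_insert hx]
      rw [h1, hAlin (c a) (g a) _ (hg a (Finset.mem_insert_self a s))
        (Sm_sum s c g (fun i hi => hg i (Finset.mem_insert_of_mem hi))),
        ih (fun i hi => hg i (Finset.mem_insert_of_mem hi))]
      funext x; rw [Finset.sum_insert hx]

lemma iter_zero {Aop : (Yn n → ℂ) → Yn n → ℂ} (h0 : Aop 0 = 0) (k : ℕ) :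
    Aop^[k] 0 = 0 := by
  induction k with
  | zero => rfl
  | succ k ih => rw [Function.iterate_succ_apply', ih, h0]

lemma iter_lin {Aop : (Yn n → ℂ) → Yn n → ℂ} (hpres : ∀ f, Sm f → Sm (Aop f))
    (hlin : ∀ (c : ℂ) u v, Sm u → Sm v →
      Aop (fun x => c * u x + v x) = fun x => c * Aop u x + Aop v x) (k : ℕ) :
    ∀ (c : ℂ) u v, Sm u → Sm v →
      Aop^[k] (fun x => c * u x + v x) = fun x => c * Aop^[k] u x + Aop^[k] v x := by
  induction k with
  | zero => intro c u v _ _; rfl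
  | succ k ih =>
      intro c u v hu hv
      rw [Function.iterate_succ_apply, Function.iterate_succ_apply,
        Function.iterate_succ_apply, hlin c u v hu hv, ih c (Aop u) (Aop v) (hpres u hu) (hpres v hv)]

lemma MM_zero (hT0 : ∀ m, T m 0 = 0) (L : List (Fin n)) (j : Fin n → ℕ) :
    MM T L j 0 = 0 := by
  induction L with
  | nil => rfl
  | cons l L ih => rw [MM_cons, ih, iter_zero (hT0 l)]

lemma MM_lin (hTpres : ∀ m f, Sm f → Sm (T m f))
    (hTlin : ∀ m (c : ℂ) u v, Sm u → Sm v →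
      T m (fun x => c * u x + v x) = fun x => c * T m u x + T m v x)
    (L : List (Fin n)) (j : Fin n → ℕ) :
    ∀ (c : ℂ) u v, Sm u → Sm v →
      MM T L j (fun x => c * u x + v x) = fun x => c * MM T L j u x + MM T L j v x := by
  induction L with
  | nil => intro c u v _ _; rfl
  | cons l L ih =>
      intro c u v hu hv
      rw [MM_cons, MM_cons, MM_cons, ih c u v hu hv,
        iter_lin (hpres := hTpres l) (hTlin l) (j l) c (MM T L j u) (MM T L j v)
          (MM_pres hTpres L j hu) (MM_pres hTpres L j hv)]

lemma MM_sum (hTpres : ∀ m f, Sm f → Sm (T m f))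
    (hTlin : ∀ m (c : ℂ) u v, Sm u → Sm v →
      T m (fun x => c * u x + v x) = fun x => c * T m u x + T m v x)
    (hT0 : ∀ m, T m 0 = 0) (L : List (Fin n)) (j : Fin n → ℕ)
    {ι : Type*} (s : Finset ι) (c : ι → ℂ) (g : ι → Yn n → ℂ)
    (hg : ∀ i ∈ s, Sm (g i)) :
    MM T L j (fun x => ∑ i ∈ s, c i * g i x) = fun x => ∑ i ∈ s, c i * MM T L j (g i) x :=
  op_sum (MM T L j) (MM_zero hT0 L j) (MM_lin hTpres hTlin L j) s c g hg

section PairLeib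
variable {Aop Bop : (Yn n → ℂ) → Yn n → ℂ}
variable (hCLsm : ∀ u, CL u → Sm u) (hApres : ∀ u, CL u → CL (Aop u))
  (hBpres : ∀ v, Sm v → Sm (Bop v)) (hB0 : Bop 0 = 0)
  (hBlin : ∀ (c : ℂ) u v, Sm u → Sm v →
    Bop (fun x => c * u x + v x) = fun x => c * Bop u x + Bop v x)
  (hLeib : ∀ u v, CL u → Sm v →
    Bop (fun x => u x * v x) = fun x => Aop u x * v x + u x * Bop v x)

include hCLsm hApres hBpres hB0 hBlin hLeib in
lemma iter_leib (t : ℕ) {u v : Yn n → ℂ} (hu : CL u) (hv : Sm v) :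
    Bop^[t] (fun x => u x * v x) = fun x =>
      ∑ i ∈ Finset.range (t+1), ((t.choose i : ℂ)) * (Aop^[i] u x * Bop^[t-i] v x) := by
  induction t with
  | zero => funext x; simp
  | succ t ih =>
      rw [Function.iterate_succ_apply', ih,
        op_sum Bop hB0 hBlin (Finset.range (t+1)) (fun i => (t.choose i : ℂ))
          (fun i => fun x => Aop^[i] u x * Bop^[t-i] v x)
          (fun i _ => (hCLsm _ (iter_pres hApres i hu)).mul (iter_pres hBpres (t-i) hv))]
      funext x
      have hstep : ∀ i ∈ Finset.range (t+1),
          ((t.choose i : ℂ)) * Bop (fun y => Aop^[i] u y * Bop^[t-i] v y) x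
            = (t.choose i : ℂ) * (Aop^[i+1] u x * Bop^[t-i] v x)
              + (t.choose i : ℂ) * (Aop^[i] u x * Bop^[t+1-i] v x) := by
        intro i hi
        rw [hLeib _ _ (iter_pres hApres i hu) (iter_pres hBpres (t-i) hv)]
        have hit : i ≤ t := Nat.lt_succ_iff.mp (Finset.mem_range.mp hi)
        have h1 : Aop (Aop^[i] u) = Aop^[i+1] u := (Function.iterate_succ_apply' Aop i u).symm
        have h2 : Bop (Bop^[t-i] v) = Bop^[t+1-i] v := by
          rw [← Function.iterate_succ_apply' Bop (t-i) v]
          congr 1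
          omega
        simp only [h1, h2]
        ring
      set a : ℕ → ℂ := fun i => Aop^[i] u x with ha
      set b : ℕ → ℂ := fun i => Bop^[i] v x with hbb
      have h2 : ∑ i ∈ Finset.range (t+2), (t.choose i : ℂ) * (a i * b (t+1-i))
          = ∑ i ∈ Finset.range (t+1), (t.choose i : ℂ) * (a i * b (t+1-i)) := by
        rw [Finset.sum_range_succ]; simp [Nat.choose_succ_self]
      have h3 : ∑ i ∈ Finset.range (t+2), (t.choose i : ℂ) * (a i * b (t+1-i))
          = (∑ i ∈ Finset.range (t+1), (t.choose (i+1) : ℂ) * (a (i+1) * b (t-i)))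
            + (a 0 * b (t+1)) := by
        rw [Finset.sum_range_succ' (fun i => (t.choose i : ℂ) * (a i * b (t+1-i))) (t+1)]
        simp [Nat.succ_sub_succ]
      have h4 : ∑ i ∈ Finset.range (t+1+1), ((t+1).choose i : ℂ) * (a i * b (t+1-i))
          = (∑ i ∈ Finset.range (t+1), ((t+1).choose (i+1) : ℂ) * (a (i+1) * b (t-i)))
            + (a 0 * b (t+1)) := by
        rw [Finset.sum_range_succ' (fun i => ((t+1).choose i : ℂ) * (a i * b (t+1-i))) (t+1)]
        simp [Nat.succ_sub_succ]
      have h5 : ∀ i ∈ Finset.range (t+1),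
          (((t+1).choose (i+1) : ℂ)) * (a (i+1) * b (t-i))
            = (t.choose i : ℂ) * (a (i+1) * b (t-i)) + (t.choose (i+1) : ℂ) * (a (i+1) * b (t-i)) := by
        intro i _
        rw [Nat.choose_succ_succ]
        push_cast; ring
      calc ∑ i ∈ Finset.range (t+1), (t.choose i : ℂ) * Bop (fun y => Aop^[i] u y * Bop^[t-i] v y) x
          = ∑ i ∈ Finset.range (t+1), ((t.choose i : ℂ) * (a (i+1) * b (t-i))
              + (t.choose i : ℂ) * (a i * b (t+1-i))) := Finset.sum_congr rfl hstep
        _ = (∑ i ∈ Finset.range (t+1), (t.choose i : ℂ) * (a (i+1) * b (t-i)))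
              + ∑ i ∈ Finset.range (t+1), (t.choose i : ℂ) * (a i * b (t+1-i)) :=
            Finset.sum_add_distrib
        _ = (∑ i ∈ Finset.range (t+1), (t.choose i : ℂ) * (a (i+1) * b (t-i)))
              + ((∑ i ∈ Finset.range (t+1), (t.choose (i+1) : ℂ) * (a (i+1) * b (t-i)))
                + (a 0 * b (t+1))) := by rw [← h2, h3]
        _ = (∑ i ∈ Finset.range (t+1), ((t+1).choose (i+1) : ℂ) * (a (i+1) * b (t-i)))
              + (a 0 * b (t+1)) := by
            rw [Finset.sum_congr rfl h5, Finset.sum_add_distrib]; ring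
        _ = ∑ i ∈ Finset.range (t+1+1), ((t+1).choose i : ℂ) * (a i * b (t+1-i)) := h4.symm
end PairLeib


end Preq

namespace Preq
variable {n : ℕ}

lemma sum_update_piFinset {l : Fin n} {t : Fin n → Finset ℕ} (htl : t l = {0})
    (s : Finset ℕ) (g : (Fin n → ℕ) → ℂ) :
    ∑ a ∈ Fintype.piFinset t, ∑ i ∈ s, g (Function.update a l i)
      = ∑ b ∈ Fintype.piFinset (Function.update t l s), g b := by
  rw [← Finset.sum_product' (f := fun a i => g (Function.update a l i))]
  refine Finset.sum_nbij' (fun p => Function.update p.1 l p.2)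
    (fun b => (Function.update b l 0, b l)) ?_ ?_ ?_ ?_ ?_
  · rintro ⟨a, i⟩ hp
    rw [Finset.mem_product] at hp
    rw [Fintype.mem_piFinset]
    intro m
    rcases eq_or_ne m l with rfl | hm
    · simp only [Function.update_self]
      exact hp.2
    · simp only [Function.update_of_ne hm]
      exact Fintype.mem_piFinset.mp hp.1 m
  · intro b hb
    rw [Fintype.mem_piFinset] at hb
    rw [Finset.mem_product]
    constructor
    · rw [Fintype.mem_piFinset]
      intro m
      rcases eq_or_ne m l with rfl | hm
      · simp [htl]
      · simp only [Function.update_of_ne hm]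
        have := hb m; rwa [Function.update_of_ne hm] at this
    · have := hb l; rwa [Function.update_self] at this
  · rintro ⟨a, i⟩ hp
    rw [Finset.mem_product] at hp
    have ha : a l = 0 := by
      have := Fintype.mem_piFinset.mp hp.1 l
      rw [htl, Finset.mem_singleton] at this; exact this
    refine Prod.ext ?_ ?_
    · show Function.update (Function.update a l i) l 0 = a
      rw [Function.update_idem]
      funext m
      rcases eq_or_ne m l with rfl | hm
      · rw [Function.update_self, ha]
      · rw [Function.update_of_ne hm]
    · show Function.update a l i l = i
      rw [Function.update_self]
  · intro b _
    show Function.update (Function.update b l 0) l (b l) = b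
    rw [Function.update_idem]
    funext m
    rcases eq_or_ne m l with rfl | hm
    · rw [Function.update_self]
    · rw [Function.update_of_ne hm]
  · rintro ⟨a, i⟩ _; rfl

def cubeL (L : List (Fin n)) (j : Fin n → ℕ) : Finset (Fin n → ℕ) :=
  Fintype.piFinset (fun m => if m ∈ L then Finset.range (j m + 1) else {0})

lemma cubeL_zero {L : List (Fin n)} {j : Fin n → ℕ} {a : Fin n → ℕ} (ha : a ∈ cubeL L j)
    {m : Fin n} (hm : m ∉ L) : a m = 0 := by
  have := Fintype.mem_piFinset.mp ha m
  rw [if_neg hm, Finset.mem_singleton] at this; exact this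

section MultiLeib
variable {A B : Fin n → (Yn n → ℂ) → Yn n → ℂ} {CL : (Yn n → ℂ) → Prop}
variable (hCLsm : ∀ u, CL u → Sm u) (hApres : ∀ m u, CL u → CL (A m u))
  (hBpres : ∀ m v, Sm v → Sm (B m v)) (hB0 : ∀ m, B m 0 = 0)
  (hBlin : ∀ m (c : ℂ) u v, Sm u → Sm v →
    B m (fun x => c * u x + v x) = fun x => c * B m u x + B m v x)
  (hLeib : ∀ m u v, CL u → Sm v →
    B m (fun x => u x * v x) = fun x => A m u x * v x + u x * B m v x)

include hCLsm hApres hBpres hB0 hBlin hLeib in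
lemma MM_leibniz : ∀ (L : List (Fin n)), L.Nodup → ∀ (j : Fin n → ℕ) (u v : Yn n → ℂ),
    CL u → Sm v →
    MM B L j (fun x => u x * v x) = fun x =>
      ∑ a ∈ cubeL L j, (∏ m, ((j m).choose (a m) : ℂ))
        * (MM A L a u x * MM B L (fun m' => j m' - a m') v x) := by
  intro L
  induction L with
  | nil =>
      intro _ j u v hu hv
      rw [MM_nil]
      funext x
      have hset : cubeL ([] : List (Fin n)) j = {fun _ => 0} := by
        rw [cubeL]
        have : (fun m : Fin n => if m ∈ ([] : List (Fin n)) then Finset.range (j m + 1)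
            else ({0} : Finset ℕ)) = fun m : Fin n => ({(fun _ : Fin n => (0:ℕ)) m} : Finset ℕ) := by
          funext m; simp
        rw [this, Fintype.piFinset_singleton]
      rw [hset, Finset.sum_singleton]
      simp [MM_nil]
  | cons l L ih =>
      intro hnd j u v hu hv
      have hlL : l ∉ L := (List.nodup_cons.mp hnd).1
      have hndL : L.Nodup := (List.nodup_cons.mp hnd).2
      rw [MM_cons, ih hndL j u v hu hv,
        op_sum ((B l)^[j l]) (iter_zero (hB0 l) (j l)) (iter_lin (hBpres l) (hBlin l) (j l))
          (cubeL L j) _ _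
          (fun a _ => (hCLsm _ (MM_pres hApres L a hu)).mul
            (MM_pres hBpres L (fun m' => j m' - a m') hv))]
      funext x
      have hterm : ∀ a ∈ cubeL L j,
          (∏ m, ((j m).choose (a m) : ℂ))
              * (B l)^[j l] (fun y => MM A L a u y * MM B L (fun m' => j m' - a m') v y) x
            = ∑ i ∈ Finset.range (j l + 1),
                (∏ m, ((j m).choose (Function.update a l i m) : ℂ))
                  * (MM A (l::L) (Function.update a l i) u x
                    * MM B (l::L) (fun m' => j m' - Function.update a l i m') v x) := by
        intro a haL
        have hal : a l = 0 := cubeL_zero haL hlL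
        have hne : ∀ m ∈ L, m ≠ l := by
          intro m hm h
          exact hlL (h ▸ hm)
        rw [congrFun (iter_leib hCLsm (hApres l) (hBpres l) (hB0 l) (hBlin l) (hLeib l)
          (j l) (MM_pres hApres L a hu) (MM_pres hBpres L (fun m' => j m' - a m') hv)) x,
          Finset.mul_sum]
        refine Finset.sum_congr rfl ?_
        intro i _
        have eA : MM A (l::L) (Function.update a l i) u = (A l)^[i] (MM A L a u) := by
          rw [MM_cons, Function.update_self,
            MM_congr L (fun m hm => Function.update_of_ne (hne m hm) i a) u]
        have eB : MM B (l::L) (fun m' => j m' - Function.update a l i m') v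
            = (B l)^[j l - i] (MM B L (fun m' => j m' - a m') v) := by
          rw [MM_cons]
          simp only [Function.update_self]
          rw [MM_congr L (j := fun m' => j m' - Function.update a l i m')
            (j' := fun m' => j m' - a m')
            (fun m hm => by simp only [Function.update_of_ne (hne m hm)]) v]
        have ecoef : (∏ m, ((j m).choose (Function.update a l i m) : ℂ))
            = ((j l).choose i : ℂ) * ∏ m ∈ Finset.univ.erase l, ((j m).choose (a m) : ℂ) := by
          have : (fun m => ((j m).choose (Function.update a l i m) : ℂ))
              = Function.update (fun m => ((j m).choose (a m) : ℂ)) l ((j l).choose i : ℂ) := by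
            funext m
            rcases eq_or_ne m l with rfl | hm
            · rw [Function.update_self, Function.update_self]
            · rw [Function.update_of_ne hm, Function.update_of_ne hm]
          rw [this, Finset.prod_update_of_mem (Finset.mem_univ l)]
          rw [Finset.sdiff_singleton_eq_erase]
        have ecoef2 : (∏ m, ((j m).choose (a m) : ℂ))
            = ∏ m ∈ Finset.univ.erase l, ((j m).choose (a m) : ℂ) := by
          rw [← Finset.prod_erase_mul Finset.univ _ (Finset.mem_univ l), hal]
          simp
        rw [eA, eB, ecoef, ecoef2]
        ring
      rw [Finset.sum_congr rfl hterm]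
      have hupd : Function.update
          (fun m => if m ∈ L then Finset.range (j m + 1) else ({0} : Finset ℕ)) l
          (Finset.range (j l + 1))
          = fun m => if m ∈ (l::L) then Finset.range (j m + 1) else ({0} : Finset ℕ) := by
        funext m
        rcases eq_or_ne m l with rfl | hm
        · rw [Function.update_self, if_pos (List.mem_cons_self)]
        · rw [Function.update_of_ne hm]
          simp [List.mem_cons, hm]
      rw [cubeL, sum_update_piFinset (if_neg hlL) (Finset.range (j l + 1))
        (fun b => (∏ m, ((j m).choose (b m) : ℂ))
          * (MM A (l::L) b u x * MM B (l::L) (fun m' => j m' - b m') v x)), hupd]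
      rfl
end MultiLeib

end Preq

namespace Preq
variable {n : ℕ}

lemma Pmulti_MM (j : Fin n → ℕ) (f : Yn n → ℂ) :
    Pmulti j f = MM dPm (List.finRange n) j f := rfl
lemma Qmulti_MM (j : Fin n → ℕ) (f : Yn n → ℂ) :
    Qmulti j f = MM dQm (List.finRange n) j f := rfl
lemma Bmulti_MM (hb : ℝ) (j : Fin n → ℕ) (f : Yn n → ℂ) :
    Bmulti hb j f = MM (Bm hb) (List.finRange n) j f := rfl

lemma dP_pres : ∀ (m : Fin n) (f : Yn n → ℂ), Sm f → Sm (dPm m f) :=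
  fun _ _ hf => dPm_smooth hf
lemma dQ_pres : ∀ (m : Fin n) (f : Yn n → ℂ), Sm f → Sm (dQm m f) :=
  fun _ _ hf => dQm_smooth hf
lemma dB_pres (hb : ℝ) : ∀ (m : Fin n) (f : Yn n → ℂ), Sm f → Sm (Bm hb m f) :=
  fun _ _ hf => Bm_smooth hb hf

lemma Pmulti_smooth {j : Fin n → ℕ} {f : Yn n → ℂ} (hf : Sm f) : Sm (Pmulti j f) :=
  MM_pres (CL := Sm) dP_pres _ j hf
lemma Qmulti_smooth {j : Fin n → ℕ} {f : Yn n → ℂ} (hf : Sm f) : Sm (Qmulti j f) :=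
  MM_pres (CL := Sm) dQ_pres _ j hf
lemma Bmulti_smooth (hb : ℝ) {j : Fin n → ℕ} {f : Yn n → ℂ} (hf : Sm f) : Sm (Bmulti hb j f) :=
  MM_pres (CL := Sm) (dB_pres hb) _ j hf

lemma Pmulti_zero (j : Fin n → ℕ) : Pmulti j (0 : Yn n → ℂ) = 0 :=
  MM_zero (fun _ => dPm_zero) _ j
lemma Qmulti_zero (j : Fin n → ℕ) : Qmulti j (0 : Yn n → ℂ) = 0 :=
  MM_zero (fun _ => dQm_zero) _ j

lemma Pmulti_add {a b : Fin n → ℕ} {f : Yn n → ℂ} (hf : Sm f) :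
    Pmulti (a + b) f = Pmulti a (Pmulti b f) :=
  MM_add (CL := Sm) dP_pres (fun _ _ _ hf' => dPm_dPm_comm hf') _ a b hf
lemma Bmulti_add (hb : ℝ) {a b : Fin n → ℕ} {f : Yn n → ℂ} (hf : Sm f) :
    Bmulti hb (a + b) f = Bmulti hb a (Bmulti hb b f) :=
  MM_add (CL := Sm) (dB_pres hb) (fun _ _ _ hf' => Bm_Bm_comm hb hf') _ a b hf

lemma Pmulti_Q_swap {c j : Fin n → ℕ} {G : Yn n → ℂ} (hG : Sm G) :
    Pmulti c (Qmulti j G) = Qmulti j (Pmulti c G) := by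
  rw [Pmulti_MM, Qmulti_MM, Qmulti_MM, Pmulti_MM]
  refine comm_MM (CL := Sm) (T := dQm) (Aop := MM dPm (List.finRange n) c) ?_ dQ_pres _ j hG
  intro m f hf
  exact (comm_MM (CL := Sm) (T := dPm) (Aop := dQm m)
    (fun l f' hf' => (dPm_dQm_comm hf').symm) dP_pres _ c hf).symm

lemma Pmulti_dT {k : Fin n → ℕ} {f : Yn n → ℂ} (hf : Sm f) :
    dTn (Pmulti k f) = Pmulti k (dTn f) := by
  rw [Pmulti_MM k f, Pmulti_MM k (dTn f)]
  exact comm_MM (CL := Sm) (T := dPm) (Aop := dTn)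
    (fun _ f' hf' => dTn_dPm_comm hf') dP_pres _ k hf

lemma Obs_Pmulti {k : Fin n → ℕ} {G : Yn n → ℂ} (hG : Obs G) : Obs (Pmulti k G) :=
  ⟨Pmulti_smooth hG.1, by rw [Pmulti_dT hG.1, hG.2, Pmulti_MM, MM_zero (fun _ => dPm_zero)]⟩

lemma Pmulti_sum {ι : Type*} (k : Fin n → ℕ) (s : Finset ι) (c : ι → ℂ) (g : ι → Yn n → ℂ)
    (hg : ∀ i ∈ s, Sm (g i)) :
    Pmulti k (fun x => ∑ i ∈ s, c i * g i x) = fun x => ∑ i ∈ s, c i * Pmulti k (g i) x :=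
  MM_sum dP_pres (fun _ c' u v hu hv => dPm_linear c' hu hv) (fun _ => dPm_zero) _ k s c g hg

lemma Bmulti_sum (hb : ℝ) {ι : Type*} (k : Fin n → ℕ) (s : Finset ι) (c : ι → ℂ)
    (g : ι → Yn n → ℂ) (hg : ∀ i ∈ s, Sm (g i)) :
    Bmulti hb k (fun x => ∑ i ∈ s, c i * g i x) = fun x => ∑ i ∈ s, c i * Bmulti hb k (g i) x :=
  MM_sum (dB_pres hb) (fun _ c' u v hu hv => Bm_linear hb c' hu hv) (fun _ => Bm_zero hb) _ k s c g hg

def cube (k : Fin n → ℕ) : Finset (Fin n → ℕ) :=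
  Fintype.piFinset fun m => Finset.range (k m + 1)

lemma cubeL_finRange (k : Fin n → ℕ) : cubeL (List.finRange n) k = cube k := by
  rw [cubeL, cube]
  congr 1
  funext m
  rw [if_pos (List.mem_finRange m)]

lemma Pmulti_leibniz (k : Fin n → ℕ) {u v : Yn n → ℂ} (hu : Sm u) (hv : Sm v) :
    Pmulti k (fun x => u x * v x) = fun x =>
      ∑ a ∈ cube k, (∏ m, ((k m).choose (a m) : ℂ))
        * (Pmulti a u x * Pmulti (fun m' => k m' - a m') v x) := by
  rw [Pmulti_MM, MM_leibniz (CL := (Sm : (Yn n → ℂ) → Prop)) (A := dPm) (B := dPm)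
    (fun _ h => h) (fun m u' hu' => dPm_smooth hu') dP_pres (fun _ => dPm_zero)
    (fun _ c' u' v' hu' hv' => dPm_linear c' hu' hv')
    (fun m u' v' hu' hv' => dPm_mul hu' hv') _ (List.nodup_finRange n) k u v hu hv,
    cubeL_finRange]
  rfl

lemma Bmulti_leibniz (hb : ℝ) (j : Fin n → ℕ) {u v : Yn n → ℂ} (hu : Obs u) (hv : Sm v) :
    Bmulti hb j (fun x => u x * v x) = fun x =>
      ∑ b ∈ cube j, (∏ m, ((j m).choose (b m) : ℂ))
        * (Qmulti b u x * Bmulti hb (fun m' => j m' - b m') v x) := by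
  rw [Bmulti_MM, MM_leibniz (CL := Obs) (A := dQm) (B := Bm hb)
    (fun _ h => h.sm) (fun m u' hu' => hu'.dQ) (dB_pres hb) (fun _ => Bm_zero hb)
    (fun _ c' u' v' hu' hv' => Bm_linear hb c' hu' hv')
    (fun m u' v' hu' hv' => Bm_mul hb hu' hv') _ (List.nodup_finRange n) j u v hu hv,
    cubeL_finRange]
  rfl

/-! ### boxes, reindexing, coefficients -/

def Box (M : ℕ) : Finset (Fin n → ℕ) := Fintype.piFinset fun _ => Finset.range M

lemma not_mem_Box {M : ℕ} {j : Fin n → ℕ} (hj : j ∉ Box M) : ∃ m, M ≤ j m := by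
  by_contra hc
  push_neg at hc
  exact hj (Fintype.mem_piFinset.mpr fun m => Finset.mem_range.mpr (hc m))

lemma le_sum_of_mem {j : Fin n → ℕ} (m : Fin n) : j m ≤ ∑ i, j i :=
  Finset.single_le_sum (fun i _ => Nat.zero_le (j i)) (Finset.mem_univ m)

lemma RL (M : ℕ) (g : (Fin n → ℕ) → (Fin n → ℕ) → ℂ)
    (hg : ∀ a a', a + a' ∉ (Box M : Finset (Fin n → ℕ)) → g a a' = 0) :
    ∑ k ∈ (Box M : Finset (Fin n → ℕ)), ∑ a ∈ cube k, g a (fun m => k m - a m)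
      = ∑ a ∈ (Box M : Finset (Fin n → ℕ)), ∑ a' ∈ Box M, g a a' := by
  classical
  rw [← Finset.sum_product' (f := fun a a' => g a a'), Finset.sum_sigma' (Box M) cube
    (fun k a => g a (fun m => k m - a m))]
  rw [show ∑ p ∈ (Box M ×ˢ Box M : Finset _), g p.1 p.2
      = ∑ p ∈ (Box M ×ˢ Box M).filter (fun p => p.1 + p.2 ∈ (Box M : Finset (Fin n → ℕ))),
        g p.1 p.2 from (Finset.sum_filter_of_ne (fun p _ hne => by
          by_contra hmem
          exact hne (hg p.1 p.2 hmem))).symm]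
  refine Finset.sum_nbij' (fun p => (p.2, fun m => p.1 m - p.2 m))
    (fun q => ⟨q.1 + q.2, q.1⟩) ?_ ?_ ?_ ?_ ?_
  · rintro ⟨k, a⟩ hp
    rw [Finset.mem_sigma] at hp
    have hk := Fintype.mem_piFinset.mp hp.1
    have ha := Fintype.mem_piFinset.mp hp.2
    rw [Finset.mem_filter, Finset.mem_product]
    have hak : ∀ m, a m ≤ k m := fun m =>
      Nat.lt_succ_iff.mp (Finset.mem_range.mp (ha m))
    have hsum : a + (fun m => k m - a m) = k := by
      funext m
      have := hak m
      simp only [Pi.add_apply]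
      omega
    refine ⟨⟨?_, ?_⟩, ?_⟩
    · exact Fintype.mem_piFinset.mpr fun m => Finset.mem_range.mpr
        (lt_of_le_of_lt (hak m) (Finset.mem_range.mp (hk m)))
    · exact Fintype.mem_piFinset.mpr fun m => Finset.mem_range.mpr
        (lt_of_le_of_lt (Nat.sub_le _ _) (Finset.mem_range.mp (hk m)))
    · rw [hsum]; exact hp.1
  · rintro ⟨a, a'⟩ hq
    rw [Finset.mem_filter, Finset.mem_product] at hq
    rw [Finset.mem_sigma]
    refine ⟨hq.2, ?_⟩
    exact Fintype.mem_piFinset.mpr fun m => Finset.mem_range.mpr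
      (by simp only [Pi.add_apply]; omega)
  · rintro ⟨k, a⟩ hp
    rw [Finset.mem_sigma] at hp
    have ha := Fintype.mem_piFinset.mp hp.2
    have hak : ∀ m, a m ≤ k m := fun m =>
      Nat.lt_succ_iff.mp (Finset.mem_range.mp (ha m))
    have hsum : (a + fun m => k m - a m) = k := by
      funext m
      have := hak m
      simp only [Pi.add_apply]
      omega
    exact Sigma.ext hsum HEq.rfl
  · rintro ⟨a, a'⟩ _
    refine Prod.ext rfl ?_
    show (fun m => (a + a') m - a m) = a'
    funext m
    simp only [Pi.add_apply]
    omega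
  · rintro ⟨k, a⟩ _
    rfl

noncomputable def co (hb : ℝ) (j : Fin n → ℕ) : ℂ :=
  ((hb : ℂ) / Complex.I) ^ (∑ m, j m) * ∏ m, (1 : ℂ) / (Nat.factorial (j m) : ℂ)

lemma coord_id (p q : ℕ) :
    (1 : ℂ) / ((p + q).factorial : ℂ) * (((p + q).choose p : ℕ) : ℂ)
      = (1 / (p.factorial : ℂ)) * (1 / (q.factorial : ℂ)) := by
  have h : (p + q).choose p * p.factorial * q.factorial = (p + q).factorial := by
    have h0 := Nat.add_choose_mul_factorial_mul_factorial p q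
    rw [Nat.choose_symm_add]
    linarith [h0]
  have hc : (((p + q).choose p : ℕ) : ℂ) * (p.factorial : ℂ) * (q.factorial : ℂ)
      = ((p + q).factorial : ℂ) := by exact_mod_cast congrArg (Nat.cast : ℕ → ℂ) h
  have h1 : (p.factorial : ℂ) ≠ 0 := Nat.cast_ne_zero.mpr (Nat.factorial_ne_zero p)
  have h2 : (q.factorial : ℂ) ≠ 0 := Nat.cast_ne_zero.mpr (Nat.factorial_ne_zero q)
  have h3 : ((p + q).factorial : ℂ) ≠ 0 := Nat.cast_ne_zero.mpr (Nat.factorial_ne_zero _)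
  field_simp
  linear_combination hc

lemma co_id (hb : ℝ) (a a' : Fin n → ℕ) :
    co hb (a + a') * ∏ m, (((a m + a' m).choose (a m) : ℕ) : ℂ) = co hb a * co hb a' := by
  rw [co, co, co]
  have hsum : (∑ m, (a + a') m) = (∑ m, a m) + ∑ m, a' m := by
    rw [← Finset.sum_add_distrib]
    rfl
  rw [hsum, pow_add]
  rw [mul_assoc, ← Finset.prod_mul_distrib]
  have : ∀ m ∈ Finset.univ, (1 : ℂ) / (((a + a') m).factorial : ℂ)
      * (((a m + a' m).choose (a m) : ℕ) : ℂ)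
      = (1 / ((a m).factorial : ℂ)) * (1 / ((a' m).factorial : ℂ)) := by
    intro m _
    exact coord_id (a m) (a' m)
  rw [Finset.prod_congr rfl this, Finset.prod_mul_distrib]
  ring

end Preq

namespace Preq
variable {n : ℕ}

noncomputable def kerL (hb : ℝ) (M : ℕ) (F G h : Yn n → ℂ) (x : Yn n)
    (a a' : Fin n → ℕ) : ℂ :=
  ∑ j ∈ (Box M : Finset (Fin n → ℕ)),
    (co hb (a + a') * co hb j * ∏ m, (((a m + a' m).choose (a m) : ℕ) : ℂ))
      * (Pmulti (a + j) F x * (Qmulti j (Pmulti a' G) x * Bmulti hb (a + a') h x))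

lemma kerL_apply (hb : ℝ) (M : ℕ) (F G h : Yn n → ℂ) (x : Yn n) (a a' : Fin n → ℕ) :
    kerL hb M F G h x a a' = ∑ j ∈ (Box M : Finset (Fin n → ℕ)),
      (co hb (a + a') * co hb j * ∏ m, (((a m + a' m).choose (a m) : ℕ) : ℂ))
        * (Pmulti (a + j) F x * (Qmulti j (Pmulti a' G) x * Bmulti hb (a + a') h x)) := rfl

noncomputable def kerR (hb : ℝ) (M : ℕ) (F G h : Yn n → ℂ) (x : Yn n)
    (b b'' : Fin n → ℕ) : ℂ :=
  ∑ k ∈ (Box M : Finset (Fin n → ℕ)),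
    (co hb (b + b'') * co hb k * ∏ m, (((b m + b'' m).choose (b m) : ℕ) : ℂ))
      * (Pmulti (b + b'') F x * (Qmulti b (Pmulti k G) x * Bmulti hb (b'' + k) h x))

lemma kerR_apply (hb : ℝ) (M : ℕ) (F G h : Yn n → ℂ) (x : Yn n) (b b'' : Fin n → ℕ) :
    kerR hb M F G h x b b'' = ∑ k ∈ (Box M : Finset (Fin n → ℕ)),
      (co hb (b + b'') * co hb k * ∏ m, (((b m + b'' m).choose (b m) : ℕ) : ℂ))
        * (Pmulti (b + b'') F x * (Qmulti b (Pmulti k G) x * Bmulti hb (b'' + k) h x)) := rfl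

end Preq


open Preq

/-- Module property of the prequantum product: `(F ⋆ G) • h = F • (G • h)` for observables
`F`, `G` polynomial in the momenta and any smooth `h`. -/
theorem prequantum_product_module (hb : ℝ) (hhbar : 0 < hb) (n : ℕ) (hn : 1 ≤ n)
    (F G h : Yn n → ℂ)
    (hF : ContDiff ℝ (⊤ : ℕ∞) F) (hG : ContDiff ℝ (⊤ : ℕ∞) G) (hh : ContDiff ℝ (⊤ : ℕ∞) h)
    (hFobs : dTn F = 0) (hGobs : dTn G = 0)
    (hFpoly : ∃ N : ℕ, ∀ j : Fin n → ℕ, N < ∑ m, j m → Pmulti j F = 0)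
    (hGpoly : ∃ N : ℕ, ∀ j : Fin n → ℕ, N < ∑ m, j m → Pmulti j G = 0) :
    bulletN hb (starN hb F G) h = bulletN hb F (bulletN hb G h) := by
  classical
  obtain ⟨NF, hNF⟩ := hFpoly
  obtain ⟨NG, hNG⟩ := hGpoly
  set M : ℕ := NF + NG + 1 with hM
  have F0 : ∀ j : Fin n → ℕ, j ∉ (Box M : Finset (Fin n → ℕ)) → Pmulti j F = 0 := by
    intro j hj
    obtain ⟨m, hm⟩ := not_mem_Box hj
    exact hNF j (lt_of_lt_of_le (by omega) (hm.trans (le_sum_of_mem m)))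
  have G0 : ∀ j : Fin n → ℕ, j ∉ (Box M : Finset (Fin n → ℕ)) → Pmulti j G = 0 := by
    intro j hj
    obtain ⟨m, hm⟩ := not_mem_Box hj
    exact hNG j (lt_of_lt_of_le (by omega) (hm.trans (le_sum_of_mem m)))
  have hGO : Obs G := ⟨hG, hGobs⟩
  have hcube : ∀ (k : Fin n → ℕ), ∀ a ∈ cube k, ∀ m, a m ≤ k m := fun k a ha m =>
    Nat.lt_succ_iff.mp (Finset.mem_range.mp (Fintype.mem_piFinset.mp ha m))
  -- Step 1 : starN as a finite sum
  have hstar : starN hb F G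
      = fun y => ∑ j ∈ (Box M : Finset (Fin n → ℕ)), co hb j * (Pmulti j F y * Qmulti j G y) := by
    funext y
    refine tsum_eq_sum ?_
    intro j hj
    have h0 : Pmulti j F y = 0 := by rw [F0 j hj]; rfl
    rw [h0]
    simp
  -- Step 2 : expansion of Pmulti k (starN F G)
  have hPstar : ∀ k : Fin n → ℕ, Pmulti k (starN hb F G)
      = fun y => ∑ j ∈ (Box M : Finset (Fin n → ℕ)), ∑ a ∈ cube k,
          (co hb j * ∏ m, ((k m).choose (a m) : ℂ))
            * (Pmulti (a + j) F y * Qmulti j (Pmulti (fun m => k m - a m) G) y) := by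
    intro k
    rw [hstar, Pmulti_sum k (Box M) (co hb) (fun j y => Pmulti j F y * Qmulti j G y)
      (fun j _ => (Pmulti_smooth hF).mul (Qmulti_smooth hG))]
    funext y
    refine Finset.sum_congr rfl ?_
    intro j _
    rw [congrFun (Pmulti_leibniz (u := Pmulti j F) (v := Qmulti j G) k
      (Pmulti_smooth hF) (Qmulti_smooth hG)) y, Finset.mul_sum]
    refine Finset.sum_congr rfl ?_
    intro a _
    rw [← Pmulti_add (a := a) (b := j) hF, Pmulti_Q_swap hG]
    ring
  -- Step 2' : bulletN G h as a finite sum, and its B-expansion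
  have hbul : bulletN hb G h
      = fun y => ∑ k ∈ (Box M : Finset (Fin n → ℕ)), co hb k * (Pmulti k G y * Bmulti hb k h y) := by
    funext y
    refine tsum_eq_sum ?_
    intro k hk
    have h0 : Pmulti k G y = 0 := by rw [G0 k hk]; rfl
    rw [h0]
    simp
  have hBbul : ∀ j : Fin n → ℕ, Bmulti hb j (bulletN hb G h)
      = fun y => ∑ k ∈ (Box M : Finset (Fin n → ℕ)), ∑ b ∈ cube j,
          (co hb k * ∏ m, ((j m).choose (b m) : ℂ))
            * (Qmulti b (Pmulti k G) y * Bmulti hb ((fun m => j m - b m) + k) h y) := by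
    intro j
    rw [hbul, Bmulti_sum hb j (Box M) (co hb) (fun k y => Pmulti k G y * Bmulti hb k h y)
      (fun k _ => (Pmulti_smooth hG).mul (Bmulti_smooth hb hh))]
    funext y
    refine Finset.sum_congr rfl ?_
    intro k _
    rw [congrFun (Bmulti_leibniz hb j (u := Pmulti k G) (v := Bmulti hb k h)
      (Obs_Pmulti hGO) (Bmulti_smooth hb hh)) y, Finset.mul_sum]
    refine Finset.sum_congr rfl ?_
    intro b _
    rw [← Bmulti_add hb (a := fun m => j m - b m) (b := k) hh]
    ring
  funext x
  -- Step 3 : termwise vanishing of the k-sum outside the box (left side)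
  have hLHS0 : ∀ k : Fin n → ℕ, k ∉ (Box M : Finset (Fin n → ℕ)) →
      co hb k * (Pmulti k (starN hb F G) x * Bmulti hb k h x) = 0 := by
    intro k hk
    obtain ⟨m, hm⟩ := not_mem_Box hk
    rw [congrFun (hPstar k) x]
    have hz : ∀ j ∈ (Box M : Finset (Fin n → ℕ)), ∀ a ∈ cube k,
        (co hb j * ∏ m', ((k m').choose (a m') : ℂ))
          * (Pmulti (a + j) F x * Qmulti j (Pmulti (fun m' => k m' - a m') G) x) = 0 := by
      intro j _ a ha
      by_cases hcase : NF < ∑ m', (a + j) m'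
      · have h0 : Pmulti (a + j) F x = 0 := by rw [hNF _ hcase]; rfl
        rw [h0]; ring
      · push_neg at hcase
        have ham : a m ≤ NF := by
          have h1 : a m ≤ (a + j) m := by simp
          have h2 : (a + j) m ≤ ∑ m', (a + j) m' := le_sum_of_mem m
          omega
        have hsum : NG < ∑ m', (k m' - a m') := by
          have h2 : k m - a m ≤ ∑ m', (k m' - a m') :=
            le_sum_of_mem (j := fun m' => k m' - a m') m
          omega
        have h0 : Qmulti j (Pmulti (fun m' => k m' - a m') G) x = 0 := by
          rw [hNG _ hsum, Qmulti_zero]; rfl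
        rw [h0]; ring
    rw [Finset.sum_congr rfl (fun j hj => Finset.sum_congr rfl (fun a ha => hz j hj a ha))]
    simp
  -- Step 4 : the left side as a finite sum
  have hL1 : bulletN hb (starN hb F G) h x
      = ∑ k ∈ (Box M : Finset (Fin n → ℕ)),
        co hb k * (Pmulti k (starN hb F G) x * Bmulti hb k h x) := tsum_eq_sum hLHS0
  -- Step 5 : per-k rearrangement (left side)
  have hL2 : ∀ k ∈ (Box M : Finset (Fin n → ℕ)),
      co hb k * (Pmulti k (starN hb F G) x * Bmulti hb k h x)
        = ∑ a ∈ cube k, kerL hb M F G h x a (fun m => k m - a m) := by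
    intro k _
    rw [congrFun (hPstar k) x]
    simp only [Finset.sum_mul, Finset.mul_sum]
    rw [Finset.sum_comm (s := Box M) (t := cube k)]
    simp only [kerL_apply]
    refine Finset.sum_congr rfl ?_
    intro a ha
    refine Finset.sum_congr rfl ?_
    intro j _
    have hsub : (a + fun m => k m - a m) = k := by
      funext m
      have := hcube k a ha m
      simp only [Pi.add_apply]
      omega
    have hsub2 : ∀ m, a m + (k m - a m) = k m := fun m => by
      have := hcube k a ha m; omega
    simp only [hsub, hsub2]
    ring
  -- Step 6 : support of kerL
  have hgL0 : ∀ a a' : Fin n → ℕ, a + a' ∉ (Box M : Finset (Fin n → ℕ)) →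
      kerL hb M F G h x a a' = 0 := by
    intro a a' hmem
    obtain ⟨m, hm⟩ := not_mem_Box hmem
    rw [kerL_apply]
    refine Finset.sum_eq_zero ?_
    intro j _
    by_cases hcase : NF < ∑ m', (a + j) m'
    · have h0 : Pmulti (a + j) F x = 0 := by rw [hNF _ hcase]; rfl
      rw [h0]; ring
    · push_neg at hcase
      have ham : a m ≤ NF := by
        have h1 : a m ≤ (a + j) m := by simp
        have h2 : (a + j) m ≤ ∑ m', (a + j) m' := le_sum_of_mem m
        omega
      have hm2 : (a + a') m = a m + a' m := rfl
      have hsum : NG < ∑ m', a' m' := by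
        have h2 : a' m ≤ ∑ m', a' m' := le_sum_of_mem m
        omega
      have h0 : Qmulti j (Pmulti a' G) x = 0 := by
        rw [hNG _ hsum, Qmulti_zero]; rfl
      rw [h0]; ring
  -- Step 7 : left side equals the double-box sum of kerL
  have hLHS : bulletN hb (starN hb F G) h x
      = ∑ a ∈ (Box M : Finset (Fin n → ℕ)), ∑ a' ∈ (Box M : Finset (Fin n → ℕ)),
          kerL hb M F G h x a a' := by
    rw [hL1, Finset.sum_congr rfl hL2, RL M (kerL hb M F G h x) hgL0]
  -- Step 8 : right side vanishing and finite sum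
  have hRHS0 : ∀ j : Fin n → ℕ, j ∉ (Box M : Finset (Fin n → ℕ)) →
      co hb j * (Pmulti j F x * Bmulti hb j (bulletN hb G h) x) = 0 := by
    intro j hj
    have h0 : Pmulti j F x = 0 := by rw [F0 j hj]; rfl
    rw [h0]
    simp
  have hR1 : bulletN hb F (bulletN hb G h) x
      = ∑ j ∈ (Box M : Finset (Fin n → ℕ)),
        co hb j * (Pmulti j F x * Bmulti hb j (bulletN hb G h) x) := tsum_eq_sum hRHS0
  -- Step 9 : per-j rearrangement (right side)
  have hR2 : ∀ j ∈ (Box M : Finset (Fin n → ℕ)),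
      co hb j * (Pmulti j F x * Bmulti hb j (bulletN hb G h) x)
        = ∑ b ∈ cube j, kerR hb M F G h x b (fun m => j m - b m) := by
    intro j _
    rw [congrFun (hBbul j) x]
    simp only [Finset.mul_sum]
    rw [Finset.sum_comm (s := Box M) (t := cube j)]
    simp only [kerR_apply]
    refine Finset.sum_congr rfl ?_
    intro b hbmem
    refine Finset.sum_congr rfl ?_
    intro k _
    have hsub : (b + fun m => j m - b m) = j := by
      funext m
      have := hcube j b hbmem m
      simp only [Pi.add_apply]
      omega
    have hsub2 : ∀ m, b m + (j m - b m) = j m := fun m => by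
      have := hcube j b hbmem m; omega
    simp only [hsub, hsub2]
    ring
  -- Step 10 : support of kerR
  have hgR0 : ∀ b b'' : Fin n → ℕ, b + b'' ∉ (Box M : Finset (Fin n → ℕ)) →
      kerR hb M F G h x b b'' = 0 := by
    intro b b'' hmem
    obtain ⟨m, hm⟩ := not_mem_Box hmem
    rw [kerR_apply]
    refine Finset.sum_eq_zero ?_
    intro k _
    have hsum : NF < ∑ m', (b + b'') m' := by
      have h2 : (b + b'') m ≤ ∑ m', (b + b'') m' := le_sum_of_mem m
      omega
    have h0 : Pmulti (b + b'') F x = 0 := by rw [hNF _ hsum]; rfl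
    rw [h0]; ring
  have hRHS : bulletN hb F (bulletN hb G h) x
      = ∑ b ∈ (Box M : Finset (Fin n → ℕ)), ∑ b'' ∈ (Box M : Finset (Fin n → ℕ)),
          kerR hb M F G h x b b'' := by
    rw [hR1, Finset.sum_congr rfl hR2, RL M (kerR hb M F G h x) hgR0]
  -- Step 11 : both kernels give the same canonical triple sum
  rw [hLHS, hRHS]
  have hcanL : ∀ a a' : Fin n → ℕ, kerL hb M F G h x a a'
      = ∑ j ∈ (Box M : Finset (Fin n → ℕ)),
          (co hb j * co hb a * co hb a')
            * (Pmulti (a + j) F x * (Qmulti j (Pmulti a' G) x * Bmulti hb (a + a') h x)) := by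
    intro a a'
    rw [kerL_apply]
    refine Finset.sum_congr rfl ?_
    intro j _
    have hco : co hb (a + a') * co hb j * ∏ m, (((a m + a' m).choose (a m) : ℕ) : ℂ)
        = co hb j * co hb a * co hb a' := by
      have h1 := co_id hb a a'
      calc co hb (a + a') * co hb j * ∏ m, (((a m + a' m).choose (a m) : ℕ) : ℂ)
          = co hb j * (co hb (a + a') * ∏ m, (((a m + a' m).choose (a m) : ℕ) : ℂ)) := by ring
        _ = co hb j * (co hb a * co hb a') := by rw [h1]
        _ = co hb j * co hb a * co hb a' := by ring
    rw [hco]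
  have hcanR : ∀ b b'' : Fin n → ℕ, kerR hb M F G h x b b''
      = ∑ k ∈ (Box M : Finset (Fin n → ℕ)),
          (co hb b * co hb b'' * co hb k)
            * (Pmulti (b'' + b) F x * (Qmulti b (Pmulti k G) x * Bmulti hb (b'' + k) h x)) := by
    intro b b''
    rw [kerR_apply]
    refine Finset.sum_congr rfl ?_
    intro k _
    have hco : co hb (b + b'') * co hb k * ∏ m, (((b m + b'' m).choose (b m) : ℕ) : ℂ)
        = co hb b * co hb b'' * co hb k := by
      have h1 := co_id hb b b''
      calc co hb (b + b'') * co hb k * ∏ m, (((b m + b'' m).choose (b m) : ℕ) : ℂ)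
          = co hb k * (co hb (b + b'') * ∏ m, (((b m + b'' m).choose (b m) : ℕ) : ℂ)) := by ring
        _ = co hb k * (co hb b * co hb b'') := by rw [h1]
        _ = co hb b * co hb b'' * co hb k := by ring
    rw [hco, show b + b'' = b'' + b from add_comm b b'']
  rw [Finset.sum_congr rfl (fun a _ => Finset.sum_congr rfl (fun a' _ => hcanL a a')),
    Finset.sum_congr rfl (fun b _ => Finset.sum_congr rfl (fun b'' _ => hcanR b b''))]
  -- Reorder the sums : (a, a', j) ↦ (j, a, a') matches (b, b'', k)
  rw [Finset.sum_congr rfl (fun a _ => Finset.sum_comm), Finset.sum_comm]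
end

section
/- (Normal-ordering quantization formula.) Let F(p,q,θ) = Σ_{n=0}^N A_n(q) pⁿ with each A_n : ℝ → ℂ smooth, and let Ψ(p,q,θ) = ψ(q) e^{iθ} with ψ : ℝ → ℂ smooth. Then the normal quantum product F •ν Ψ := Σ_{k≥0} (ħ/i)^k (1/k!) (∂_p^k F)(B^k Ψ) (a finite sum) equals Σ_{n=0}^N (ħ/i)ⁿ A_n(q) ψ^{(n)}(q) e^{iθ}; in particular the result is independent of p, i.e. polarized. -/
open Complex

section Helpers

lemma dP_iter (N : ℕ) (A : ℕ → ℝ → ℂ) (F : ℝ × ℝ × ℝ → ℂ)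
    (hF : F = fun x => ∑ n ∈ Finset.range (N + 1), A n x.2.1 * (x.1 : ℂ) ^ n) :
    ∀ k, dP^[k] F = fun x => ∑ n ∈ Finset.range (N + 1),
      A n x.2.1 * (n.descFactorial k : ℂ) * (x.1 : ℂ) ^ (n - k) := by
  intro k
  induction k with
  | zero => simpa using hF
  | succ k ih =>
    rw [Function.iterate_succ_apply', ih]
    funext x
    show deriv (fun s : ℝ => ∑ n ∈ Finset.range (N + 1),
      A n x.2.1 * (n.descFactorial k : ℂ) * (s : ℂ) ^ (n - k)) x.1 = _
    have hd : HasDerivAt (fun s : ℝ => ∑ n ∈ Finset.range (N + 1),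
        A n x.2.1 * (n.descFactorial k : ℂ) * (s : ℂ) ^ (n - k))
        (∑ n ∈ Finset.range (N + 1),
          A n x.2.1 * (n.descFactorial k : ℂ) * (((n - k : ℕ) : ℂ) * (x.1 : ℂ) ^ (n - k - 1))) x.1 := by
      refine HasDerivAt.fun_sum fun n _ => ?_
      exact (HasDerivAt.comp_ofReal (e := fun z : ℂ => z ^ (n - k)) (hasDerivAt_pow (n - k) (x.1 : ℂ))).const_mul _
    rw [hd.deriv]
    refine Finset.sum_congr rfl fun n _ => ?_
    rw [Nat.descFactorial_succ]
    have he : n - k - 1 = n - (k + 1) := by omega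
    rw [he]
    push_cast
    ring

lemma hasDerivAt_expI (s : ℝ) : HasDerivAt (fun t : ℝ => Complex.exp (Complex.I * t))
    (Complex.I * Complex.exp (Complex.I * s)) s := by
  have h1 : HasDerivAt (fun z : ℂ => Complex.exp (Complex.I * z))
      (Complex.exp (Complex.I * s) * Complex.I) (s : ℂ) := by
    simpa [Function.comp_def] using (Complex.hasDerivAt_exp (Complex.I * s)).comp (s : ℂ)
      ((hasDerivAt_id (s : ℂ)).const_mul Complex.I)
  simpa [mul_comm] using h1.comp_ofReal

lemma pascal_sum (a : ℂ) (g : ℕ → ℂ) (k : ℕ) :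
    ∑ j ∈ Finset.range (k + 2), ((k + 1).choose j : ℂ) * a ^ (k + 1 - j) * g j
    = (∑ j ∈ Finset.range (k + 1), (k.choose j : ℂ) * a ^ (k - j) * g (j + 1))
      + a * ∑ j ∈ Finset.range (k + 1), (k.choose j : ℂ) * a ^ (k - j) * g j := by
  have h2 : a * ∑ j ∈ Finset.range (k + 1), (k.choose j : ℂ) * a ^ (k - j) * g j
      = (∑ j ∈ Finset.range (k + 1), (k.choose (j + 1) : ℂ) * a ^ (k - j) * g (j + 1))
        + a ^ (k + 1) * g 0 := by
    rw [Finset.mul_sum, Finset.sum_range_succ' _ k,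
      Finset.sum_range_succ (fun j => (k.choose (j + 1) : ℂ) * a ^ (k - j) * g (j + 1))]
    rw [Nat.choose_succ_self]
    push_cast
    rw [zero_mul, zero_mul, add_zero]
    congr 1
    · refine Finset.sum_congr rfl fun j hj => ?_
      have hj' : j < k := Finset.mem_range.mp hj
      have he : k - j = (k - (j + 1)) + 1 := by omega
      rw [he, pow_succ]
      ring
    · rw [Nat.choose_zero_right, Nat.sub_zero]
      push_cast
      rw [pow_succ]
      ring
  rw [Finset.sum_range_succ' _ (k + 1), h2]
  have h1 : ∀ j ∈ Finset.range (k + 1),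
      ((k + 1).choose (j + 1) : ℂ) * a ^ (k + 1 - (j + 1)) * g (j + 1)
      = (k.choose j : ℂ) * a ^ (k - j) * g (j + 1)
        + (k.choose (j + 1) : ℂ) * a ^ (k - j) * g (j + 1) := by
    intro j _
    rw [Nat.choose_succ_succ, Nat.succ_sub_succ]
    push_cast
    ring
  rw [Finset.sum_congr rfl h1, Finset.sum_add_distrib]
  rw [Nat.choose_zero_right, Nat.sub_zero]
  push_cast
  ring

lemma B_iter (hb : ℝ) (hhbar : 0 < hb) (ψ : ℝ → ℂ) (hψ : ContDiff ℝ (⊤ : ℕ∞) ψ)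
    (Ψ : ℝ × ℝ × ℝ → ℂ)
    (hΨ : Ψ = fun x => ψ x.2.1 * Complex.exp (Complex.I * (x.2.2 : ℝ))) :
    ∀ k, (Bop hb)^[k] Ψ = fun x =>
      (∑ j ∈ Finset.range (k + 1), (k.choose j : ℂ) *
          (-Complex.I * x.1 / hb) ^ (k - j) * deriv^[j] ψ x.2.1) *
        Complex.exp (Complex.I * (x.2.2 : ℝ)) := by
  intro k
  induction k with
  | zero => simpa using hΨ
  | succ k ih =>
    rw [Function.iterate_succ_apply', ih]
    funext x
    obtain ⟨p, q, θ⟩ := x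
    show dQ _ (p, q, θ) - ((p / hb : ℝ) : ℂ) * dT _ (p, q, θ) = _
    have hbne : (hb : ℂ) ≠ 0 := by
      exact_mod_cast ne_of_gt hhbar
    -- dT computation
    have hT : dT (fun x => (∑ j ∈ Finset.range (k + 1), (k.choose j : ℂ) *
          (-Complex.I * x.1 / hb) ^ (k - j) * deriv^[j] ψ x.2.1) *
        Complex.exp (Complex.I * (x.2.2 : ℝ))) (p, q, θ)
        = (∑ j ∈ Finset.range (k + 1), (k.choose j : ℂ) *
          (-Complex.I * p / hb) ^ (k - j) * deriv^[j] ψ q) *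
          (Complex.I * Complex.exp (Complex.I * (θ : ℝ))) := by
      have := ((hasDerivAt_expI θ).const_mul (∑ j ∈ Finset.range (k + 1), (k.choose j : ℂ) *
          (-Complex.I * p / hb) ^ (k - j) * deriv^[j] ψ q))
      simpa [dT, mul_comm] using this.deriv
    -- dQ computation
    have hQ : dQ (fun x => (∑ j ∈ Finset.range (k + 1), (k.choose j : ℂ) *
          (-Complex.I * x.1 / hb) ^ (k - j) * deriv^[j] ψ x.2.1) *
        Complex.exp (Complex.I * (x.2.2 : ℝ))) (p, q, θ)
        = (∑ j ∈ Finset.range (k + 1), (k.choose j : ℂ) *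
          (-Complex.I * p / hb) ^ (k - j) * deriv^[j + 1] ψ q) *
          Complex.exp (Complex.I * (θ : ℝ)) := by
      have hd : HasDerivAt (fun s : ℝ => (∑ j ∈ Finset.range (k + 1), (k.choose j : ℂ) *
            (-Complex.I * p / hb) ^ (k - j) * deriv^[j] ψ s) *
          Complex.exp (Complex.I * (θ : ℝ)))
          ((∑ j ∈ Finset.range (k + 1), (k.choose j : ℂ) *
            (-Complex.I * p / hb) ^ (k - j) * deriv^[j + 1] ψ q) *
          Complex.exp (Complex.I * (θ : ℝ))) q := by
        refine HasDerivAt.mul_const ?_ _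
        refine HasDerivAt.fun_sum fun j _ => ?_
        have hdiff : HasDerivAt (deriv^[j] ψ) (deriv^[j + 1] ψ q) q := by
          have hψ' : ContDiff ℝ (⊤ : ℕ∞) ψ := hψ.of_le (by simp)
          have h1 : Differentiable ℝ (deriv^[j] ψ) :=
            (hψ'.iterate_deriv j).differentiable (by simp)
          have := (h1 q).hasDerivAt
          rwa [show deriv^[j + 1] ψ = deriv (deriv^[j] ψ) from Function.iterate_succ_apply' deriv j ψ]
        exact hdiff.const_mul _
      simpa [dQ] using hd.deriv
    rw [hQ, hT]
    have hcast : ((p / hb : ℝ) : ℂ) = (p : ℂ) / hb := by push_cast; ring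
    rw [hcast]
    have key := pascal_sum (-Complex.I * p / hb) (fun j => deriv^[j] ψ q) k
    have : (∑ j ∈ Finset.range (k + 1 + 1), ((k + 1).choose j : ℂ) *
        (-Complex.I * p / hb) ^ (k + 1 - j) * deriv^[j] ψ q)
        = (∑ j ∈ Finset.range (k + 1), (k.choose j : ℂ) *
          (-Complex.I * p / hb) ^ (k - j) * deriv^[j + 1] ψ q)
          + (-Complex.I * p / hb) * ∑ j ∈ Finset.range (k + 1), (k.choose j : ℂ) *
          (-Complex.I * p / hb) ^ (k - j) * deriv^[j] ψ q := key
    rw [this]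
    field_simp
    ring

lemma alt_sum_C (n : ℕ) : (∑ m ∈ Finset.range (n + 1), ((-1 : ℂ) ^ m * n.choose m))
    = if n = 0 then 1 else 0 := by
  have := Int.alternating_sum_range_choose (n := n)
  have h2 := congrArg (fun z : ℤ => (z : ℂ)) this
  push_cast at h2
  split_ifs with h <;> simp_all

lemma coeff_sum (hb : ℝ) (hhbar : 0 < hb) (p : ℝ) (N n j : ℕ) (hn : n ≤ N) :
    (∑ k ∈ Finset.range (N + 1), ((hb : ℂ) / Complex.I) ^ k / (Nat.factorial k : ℂ)
      * (n.descFactorial k : ℂ) * (k.choose j : ℂ) * (p : ℂ) ^ (n - k)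
      * (-Complex.I * p / hb) ^ (k - j))
    = if j = n then ((hb : ℂ) / Complex.I) ^ n else 0 := by
  have hbne : (hb : ℂ) ≠ 0 := by exact_mod_cast ne_of_gt hhbar
  by_cases hjn : n < j
  · rw [if_neg (by omega), Finset.sum_eq_zero]
    intro k _
    rcases lt_or_ge k j with hk | hk
    · rw [Nat.choose_eq_zero_of_lt hk]
      push_cast; ring
    · rw [Nat.descFactorial_eq_zero_iff_lt.mpr (by omega)]
      push_cast; ring
  push_neg at hjn
  -- restrict the sum to Icc j n
  rw [← Finset.sum_subset (show Finset.Icc j n ⊆ Finset.range (N + 1) from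
    fun k hk => Finset.mem_range.mpr (by have := Finset.mem_Icc.mp hk; omega)) ?hz]
  case hz =>
    intro k _ hk
    simp only [Finset.mem_Icc, not_and_or, not_le] at hk
    rcases hk with hk | hk
    · rw [Nat.choose_eq_zero_of_lt (by omega)]
      push_cast; ring
    · rw [Nat.descFactorial_eq_zero_iff_lt.mpr (by omega)]
      push_cast; ring
  rw [← Finset.Ico_add_one_right_eq_Icc, Finset.sum_Ico_eq_sum_range]
  have hrange : n + 1 - j = (n - j) + 1 := by omega
  rw [hrange]
  have h4 : (((hb : ℂ) / Complex.I) * (-Complex.I * p / hb)) = -(p : ℂ) := by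
    field_simp
  have hterm : ∀ m ∈ Finset.range ((n - j) + 1),
      ((hb : ℂ) / Complex.I) ^ (j + m) / (Nat.factorial (j + m) : ℂ)
        * (n.descFactorial (j + m) : ℂ) * ((j + m).choose j : ℂ) * (p : ℂ) ^ (n - (j + m))
        * (-Complex.I * p / hb) ^ ((j + m) - j)
      = (((hb : ℂ) / Complex.I) ^ j * (n.choose j : ℂ) * (p : ℂ) ^ (n - j))
        * ((-1 : ℂ) ^ m * ((n - j).choose m : ℂ)) := by
    intro m hm
    have hm' : m ≤ n - j := by
      have := Finset.mem_range.mp hm; omega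
    have h1 : (n.descFactorial (j + m) : ℂ)
        = (Nat.factorial (j + m) : ℂ) * (n.choose (j + m) : ℂ) := by
      exact_mod_cast congrArg (Nat.cast : ℕ → ℂ) (Nat.descFactorial_eq_factorial_mul_choose n (j + m))
    have h2 : (n.choose (j + m) : ℂ) * ((j + m).choose j : ℂ)
        = (n.choose j : ℂ) * ((n - j).choose m : ℂ) := by
      have := Nat.choose_mul (n := n) (k := j + m) (s := j) (Nat.le_add_right j m)
      rw [Nat.add_sub_cancel_left] at this
      exact_mod_cast congrArg (Nat.cast : ℕ → ℂ) this
    have he1 : (j + m) - j = m := by omega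
    have he2 : n - (j + m) = (n - j) - m := by omega
    have he3 : n - j = ((n - j) - m) + m := by omega
    rw [he1, he2, h1, pow_add]
    have hfac : (Nat.factorial (j + m) : ℂ) ≠ 0 := by
      exact_mod_cast Nat.factorial_ne_zero (j + m)
    have h5 : ((hb : ℂ) / Complex.I) ^ m * (-Complex.I * p / hb) ^ m
        = (-1 : ℂ) ^ m * (p : ℂ) ^ m := by
      rw [← mul_pow, h4, ← neg_one_mul, mul_pow]
    calc ((hb : ℂ) / Complex.I) ^ j * ((hb : ℂ) / Complex.I) ^ m / (Nat.factorial (j + m) : ℂ)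
          * ((Nat.factorial (j + m) : ℂ) * (n.choose (j + m) : ℂ)) * ((j + m).choose j : ℂ)
          * (p : ℂ) ^ ((n - j) - m) * (-Complex.I * p / hb) ^ m
        = ((n.choose (j + m) : ℂ) * ((j + m).choose j : ℂ)) * (((hb : ℂ) / Complex.I) ^ j
            * (((hb : ℂ) / Complex.I) ^ m * (-Complex.I * p / hb) ^ m)
            * (p : ℂ) ^ ((n - j) - m)) := by
          field_simp
      _ = _ := by
          have hp : (p : ℂ) ^ (n - j) = (p : ℂ) ^ ((n - j) - m) * (p : ℂ) ^ m := by
            rw [← pow_add, Nat.sub_add_cancel hm']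
          rw [h2, h5, hp]
          ring
  rw [Finset.sum_congr rfl hterm, ← Finset.mul_sum, alt_sum_C]
  by_cases hj : j = n
  · subst hj
    simp [Nat.choose_self]
  · rw [if_neg (by omega), if_neg hj, mul_zero]

end Helpers

/-- Normal-ordering quantization formula: for `F = Σ_n A_n(q) pⁿ` and `Ψ = ψ(q)e^{iθ}`,
`F •ν Ψ = Σ_n (ħ/i)ⁿ A_n(q) ψ⁽ⁿ⁾(q) e^{iθ}`; in particular the result is independent of `p`. -/
theorem normal_ordering_quantization (hb : ℝ) (hhbar : 0 < hb)
    (N : ℕ) (A : ℕ → ℝ → ℂ) (hA : ∀ n, ContDiff ℝ (⊤ : ℕ∞) (A n))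
    (ψ : ℝ → ℂ) (hψ : ContDiff ℝ (⊤ : ℕ∞) ψ)
    (F Ψ : ℝ × ℝ × ℝ → ℂ)
    (hF : F = fun x => ∑ n ∈ Finset.range (N + 1), A n x.2.1 * (x.1 : ℂ) ^ n)
    (hΨ : Ψ = fun x => ψ x.2.1 * Complex.exp (Complex.I * (x.2.2 : ℝ))) :
    ∀ x : ℝ × ℝ × ℝ,
      (∑' k : ℕ, ((hb : ℂ) / Complex.I) ^ k / (Nat.factorial k : ℂ) *
          (dP^[k] F x * (Bop hb)^[k] Ψ x)) =
      ∑ n ∈ Finset.range (N + 1), ((hb : ℂ) / Complex.I) ^ n * A n x.2.1 *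
          deriv^[n] ψ x.2.1 * Complex.exp (Complex.I * (x.2.2 : ℝ)) := by
  intro x
  obtain ⟨p, q, θ⟩ := x
  have hdP := dP_iter N A F hF
  have hB := B_iter hb hhbar ψ hψ Ψ hΨ
  simp only [hdP, hB]
  rw [tsum_eq_sum (s := Finset.range (N + 1)) ?hzero]
  case hzero =>
    intro k hk
    have hz : ∑ n ∈ Finset.range (N + 1), A n q * (n.descFactorial k : ℂ) * (p : ℂ) ^ (n - k)
        = 0 := by
      apply Finset.sum_eq_zero
      intro n hn
      rw [Nat.descFactorial_eq_zero_iff_lt.mpr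
        (by simp only [Finset.mem_range, not_lt] at hk hn; omega)]
      push_cast; ring
    show _ * ((∑ n ∈ Finset.range (N + 1), A n q * (n.descFactorial k : ℂ) * (p : ℂ) ^ (n - k)) * _) = 0
    rw [hz]; ring
  -- now finite sums
  have hk1 : ∀ k ∈ Finset.range (N + 1),
      ((hb : ℂ) / Complex.I) ^ k / (Nat.factorial k : ℂ) *
        ((∑ n ∈ Finset.range (N + 1), A n q * (n.descFactorial k : ℂ) * (p : ℂ) ^ (n - k)) *
         ((∑ j ∈ Finset.range (k + 1), (k.choose j : ℂ) *
            (-Complex.I * p / hb) ^ (k - j) * deriv^[j] ψ q) *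
          Complex.exp (Complex.I * (θ : ℝ))))
      = ∑ n ∈ Finset.range (N + 1), ∑ j ∈ Finset.range (N + 1),
          (A n q * deriv^[j] ψ q * Complex.exp (Complex.I * (θ : ℝ))) *
            (((hb : ℂ) / Complex.I) ^ k / (Nat.factorial k : ℂ) * (n.descFactorial k : ℂ) *
              (k.choose j : ℂ) * (p : ℂ) ^ (n - k) * (-Complex.I * p / hb) ^ (k - j)) := by
    intro k hk
    have hkN : k ≤ N := by simpa using Nat.lt_succ_iff.mp (Finset.mem_range.mp hk)
    have hext : (∑ j ∈ Finset.range (k + 1), (k.choose j : ℂ) *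
          (-Complex.I * p / hb) ^ (k - j) * deriv^[j] ψ q)
        = ∑ j ∈ Finset.range (N + 1), (k.choose j : ℂ) *
          (-Complex.I * p / hb) ^ (k - j) * deriv^[j] ψ q := by
      apply Finset.sum_subset (Finset.range_subset_range.mpr (by omega))
      intro j hj hj'
      rw [Nat.choose_eq_zero_of_lt (by simp only [Finset.mem_range, not_lt] at hj'; omega)]
      push_cast; ring
    rw [hext]
    simp only [Finset.sum_mul, Finset.mul_sum]
    rw [Finset.sum_comm]
    refine Finset.sum_congr rfl fun n _ => Finset.sum_congr rfl fun j _ => by ring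
  rw [Finset.sum_congr rfl hk1, Finset.sum_comm]
  refine Finset.sum_congr rfl fun n hn => ?_
  have hnN : n ≤ N := Nat.lt_succ_iff.mp (Finset.mem_range.mp hn)
  rw [Finset.sum_comm]
  have hj1 : ∀ j ∈ Finset.range (N + 1),
      (∑ k ∈ Finset.range (N + 1),
        (A n q * deriv^[j] ψ q * Complex.exp (Complex.I * (θ : ℝ))) *
          (((hb : ℂ) / Complex.I) ^ k / (Nat.factorial k : ℂ) * (n.descFactorial k : ℂ) *
            (k.choose j : ℂ) * (p : ℂ) ^ (n - k) * (-Complex.I * p / hb) ^ (k - j)))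
      = if j = n then ((hb : ℂ) / Complex.I) ^ n * A n q * deriv^[n] ψ q *
          Complex.exp (Complex.I * (θ : ℝ)) else 0 := by
    intro j _
    rw [← Finset.mul_sum, coeff_sum hb hhbar p N n j hnN]
    by_cases h : j = n
    · subst h
      rw [if_pos rfl, if_pos rfl]; ring
    · rw [if_neg h, if_neg h, mul_zero]
  rw [Finset.sum_congr rfl hj1, Finset.sum_ite_eq' (Finset.range (N + 1)) n, if_pos hn]
end

section
/- With N = ∂_{p₁} ∘ B₂ and M = −B₁ ∘ ∂_{p₂} acting on smooth functions u : ℝ³×ℝ³ → ℂ, let H : ℝ³ → ℂ be smooth with ∂_θ H = 0 and let Ψ : ℝ³ → ℂ be a polarized prequantum wave function (∂_θ Ψ = iΨ, ∂_p Ψ = 0). Then the commutator satisfies (N∘M − M∘N)(H ⊗ Ψ) = −(i/ħ) (∂_q ∂_p H) ⊗ Ψ, i.e. evaluated at (x,y) it equals −(i/ħ)(∂_q∂_p H)(x)·Ψ(y). -/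
open Complex

/-- Lift an operator on `ℝ³ → ℂ` to act in the first factor of `ℝ³ × ℝ³`. -/
noncomputable def L1 (op : (ℝ × ℝ × ℝ → ℂ) → ℝ × ℝ × ℝ → ℂ)
    (u : (ℝ × ℝ × ℝ) × (ℝ × ℝ × ℝ) → ℂ) : (ℝ × ℝ × ℝ) × (ℝ × ℝ × ℝ) → ℂ :=
  fun z => op (fun x => u (x, z.2)) z.1

/-- Lift an operator on `ℝ³ → ℂ` to act in the second factor of `ℝ³ × ℝ³`. -/
noncomputable def L2 (op : (ℝ × ℝ × ℝ → ℂ) → ℝ × ℝ × ℝ → ℂ)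
    (u : (ℝ × ℝ × ℝ) × (ℝ × ℝ × ℝ) → ℂ) : (ℝ × ℝ × ℝ) × (ℝ × ℝ × ℝ) → ℂ :=
  fun z => op (fun y => u (z.1, y)) z.2

/-- The tensor product `(F ⊗ Ψ)(x,y) = F(x)·Ψ(y)`. -/
noncomputable def tens (F Ψ : ℝ × ℝ × ℝ → ℂ) : (ℝ × ℝ × ℝ) × (ℝ × ℝ × ℝ) → ℂ :=
  fun z => F z.1 * Ψ z.2

/-- The lifted normal tensor: `N u = ∂_{p₁}(B₂ u)`. -/
noncomputable def Nop (hb : ℝ) (u : (ℝ × ℝ × ℝ) × (ℝ × ℝ × ℝ) → ℂ) :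
    (ℝ × ℝ × ℝ) × (ℝ × ℝ × ℝ) → ℂ :=
  L1 dP (L2 (Bop hb) u)

/-- The lifted anti-normal tensor: `M u = −B₁(∂_{p₂} u)`. -/
noncomputable def Mop (hb : ℝ) (u : (ℝ × ℝ × ℝ) × (ℝ × ℝ × ℝ) → ℂ) :
    (ℝ × ℝ × ℝ) × (ℝ × ℝ × ℝ) → ℂ :=
  fun z => -(L1 (Bop hb) (L2 dP u) z)

section Aux

variable {f : ℝ × ℝ × ℝ → ℂ}

lemma hasDerivAt_sliceP (hf : Differentiable ℝ f) (x : ℝ × ℝ × ℝ) :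
    HasDerivAt (fun s => f (s, x.2.1, x.2.2)) (fderiv ℝ f x ((1 : ℝ), (0 : ℝ), (0 : ℝ))) x.1 := by
  have h1 : HasDerivAt (fun s : ℝ => ((s, x.2.1, x.2.2) : ℝ × ℝ × ℝ))
      ((1 : ℝ), (0 : ℝ), (0 : ℝ)) x.1 :=
    (hasDerivAt_id x.1).prodMk ((hasDerivAt_const _ _).prodMk (hasDerivAt_const _ _))
  exact (hf x).hasFDerivAt.comp_hasDerivAt x.1 h1

lemma hasDerivAt_sliceQ (hf : Differentiable ℝ f) (x : ℝ × ℝ × ℝ) :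
    HasDerivAt (fun s => f (x.1, s, x.2.2)) (fderiv ℝ f x ((0 : ℝ), (1 : ℝ), (0 : ℝ))) x.2.1 := by
  have h1 : HasDerivAt (fun s : ℝ => ((x.1, s, x.2.2) : ℝ × ℝ × ℝ))
      ((0 : ℝ), (1 : ℝ), (0 : ℝ)) x.2.1 :=
    (hasDerivAt_const _ _).prodMk ((hasDerivAt_id x.2.1).prodMk (hasDerivAt_const _ _))
  exact (hf x).hasFDerivAt.comp_hasDerivAt x.2.1 h1

lemma hasDerivAt_sliceT (hf : Differentiable ℝ f) (x : ℝ × ℝ × ℝ) :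
    HasDerivAt (fun s => f (x.1, x.2.1, s)) (fderiv ℝ f x ((0 : ℝ), (0 : ℝ), (1 : ℝ))) x.2.2 := by
  have h1 : HasDerivAt (fun s : ℝ => ((x.1, x.2.1, s) : ℝ × ℝ × ℝ))
      ((0 : ℝ), (0 : ℝ), (1 : ℝ)) x.2.2 :=
    (hasDerivAt_const _ _).prodMk ((hasDerivAt_const _ _).prodMk (hasDerivAt_id x.2.2))
  exact (hf x).hasFDerivAt.comp_hasDerivAt x.2.2 h1

lemma dP_eq (hf : Differentiable ℝ f) :
    dP f = fun x => fderiv ℝ f x ((1 : ℝ), (0 : ℝ), (0 : ℝ)) :=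
  funext fun x => (hasDerivAt_sliceP hf x).deriv

lemma dQ_eq (hf : Differentiable ℝ f) :
    dQ f = fun x => fderiv ℝ f x ((0 : ℝ), (1 : ℝ), (0 : ℝ)) :=
  funext fun x => (hasDerivAt_sliceQ hf x).deriv

lemma dT_eq (hf : Differentiable ℝ f) :
    dT f = fun x => fderiv ℝ f x ((0 : ℝ), (0 : ℝ), (1 : ℝ)) :=
  funext fun x => (hasDerivAt_sliceT hf x).deriv

lemma contDiff_dP (hf : ContDiff ℝ (⊤ : ℕ∞) f) : ContDiff ℝ (⊤ : ℕ∞) (dP f) := by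
  rw [dP_eq (hf.differentiable (by simp))]
  exact (hf.fderiv_right (by simp)).clm_apply contDiff_const

lemma contDiff_dQ (hf : ContDiff ℝ (⊤ : ℕ∞) f) : ContDiff ℝ (⊤ : ℕ∞) (dQ f) := by
  rw [dQ_eq (hf.differentiable (by simp))]
  exact (hf.fderiv_right (by simp)).clm_apply contDiff_const

lemma contDiff_dT (hf : ContDiff ℝ (⊤ : ℕ∞) f) : ContDiff ℝ (⊤ : ℕ∞) (dT f) := by
  rw [dT_eq (hf.differentiable (by simp))]
  exact (hf.fderiv_right (by simp)).clm_apply contDiff_const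

lemma fderiv_swap (hf : ContDiff ℝ (⊤ : ℕ∞) f) (x v w : ℝ × ℝ × ℝ) :
    fderiv ℝ (fun y => fderiv ℝ f y w) x v = fderiv ℝ (fun y => fderiv ℝ f y v) x w := by
  have hd : ∀ y, HasFDerivAt f (fderiv ℝ f y) y :=
    fun y => (hf.differentiable (by simp) y).hasFDerivAt
  have hf' : ContDiff ℝ (⊤ : ℕ∞) (fderiv ℝ f) := hf.fderiv_right (by simp)
  have hx : HasFDerivAt (fderiv ℝ f) (fderiv ℝ (fderiv ℝ f) x) x :=
    (hf'.differentiable (by simp) x).hasFDerivAt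
  have key : ∀ u v' : ℝ × ℝ × ℝ,
      fderiv ℝ (fun y => fderiv ℝ f y u) x v' = fderiv ℝ (fderiv ℝ f) x v' u := by
    intro u v'
    have hcomp : HasFDerivAt (fun y => fderiv ℝ f y u)
        ((ContinuousLinearMap.apply ℝ ℂ u).comp (fderiv ℝ (fderiv ℝ f) x)) x :=
      (ContinuousLinearMap.apply ℝ ℂ u).hasFDerivAt.comp x hx
    rw [hcomp.fderiv]; rfl
  rw [key w v, key v w]
  exact second_derivative_symmetric hd hx v w

lemma dP_dQ_comm (hf : ContDiff ℝ (⊤ : ℕ∞) f) : dP (dQ f) = dQ (dP f) := by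
  funext x
  rw [dP_eq ((contDiff_dQ hf).differentiable (by simp)),
      dQ_eq ((contDiff_dP hf).differentiable (by simp)),
      dQ_eq (hf.differentiable (by simp)), dP_eq (hf.differentiable (by simp))]
  exact fderiv_swap hf x _ _

lemma dT_dP_comm (hf : ContDiff ℝ (⊤ : ℕ∞) f) : dT (dP f) = dP (dT f) := by
  funext x
  have h1 := congrFun (dT_eq ((contDiff_dP hf).differentiable (by simp))) x
  have h2 := congrFun (dP_eq ((contDiff_dT hf).differentiable (by simp))) x
  rw [h1, h2, dP_eq (hf.differentiable (by simp)), dT_eq (hf.differentiable (by simp))]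
  exact fderiv_swap hf x _ _

end Aux

section Main

variable {hb : ℝ} {H Ψ : ℝ × ℝ × ℝ → ℂ}

lemma Nop_zero (hb : ℝ) : Nop hb (fun _ => (0 : ℂ)) = fun _ => 0 := by
  funext z
  simp [Nop, L1, L2, Bop, dP, dQ, dT, deriv_const]

lemma Mop_tens_zero (hΨpol : dP Ψ = 0) : Mop hb (tens H Ψ) = fun _ => 0 := by
  have hL2 : L2 dP (tens H Ψ) = fun _ => (0 : ℂ) := by
    funext w
    simp only [L2, tens, dP]
    rw [deriv_const_mul_field]
    have : dP Ψ w.2 = 0 := by rw [hΨpol]; rfl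
    simp only [dP] at this
    rw [this, mul_zero]
  funext w
  simp only [Mop]
  rw [hL2]
  simp [L1, Bop, dQ, dT, deriv_const]

lemma Nop_tens (hb : ℝ) (H Ψ : ℝ × ℝ × ℝ → ℂ) :
    Nop hb (tens H Ψ) = tens (dP H) (Bop hb Ψ) := by
  have hL2 : L2 (Bop hb) (tens H Ψ) = tens H (Bop hb Ψ) := by
    funext w
    simp only [L2, tens, Bop, dQ, dT]
    rw [deriv_const_mul_field, deriv_const_mul_field]
    ring
  simp only [Nop]
  rw [hL2]
  funext w
  simp only [L1, tens, dP]
  rw [deriv_mul_const_field]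

lemma dP_Bop_Ψ (hΨ : ContDiff ℝ (⊤ : ℕ∞) Ψ)
    (hΨeq : dT Ψ = fun x => Complex.I * Ψ x) (hΨpol : dP Ψ = 0) :
    dP (Bop hb Ψ) = fun y => -(Complex.I / (hb : ℂ)) * Ψ y := by
  have hB : Bop hb Ψ = fun w => dQ Ψ w - ((w.1 / hb : ℝ) : ℂ) * (Complex.I * Ψ w) := by
    funext w
    simp only [Bop, hΨeq]
  funext y
  rw [hB]
  -- first term: slice of dQ Ψ in p has derivative dP (dQ Ψ) y = dQ (dP Ψ) y = 0
  have hdQ : Differentiable ℝ (dQ Ψ) := (contDiff_dQ hΨ).differentiable (by simp)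
  have h1 : HasDerivAt (fun s => dQ Ψ (s, y.2.1, y.2.2)) 0 y.1 := by
    have h := hasDerivAt_sliceP hdQ y
    have hz : fderiv ℝ (dQ Ψ) y ((1 : ℝ), (0 : ℝ), (0 : ℝ)) = 0 := by
      have e1 := congrFun (dP_eq hdQ) y
      have e2 := congrFun (dP_dQ_comm hΨ) y
      rw [← e1, e2, hΨpol]
      simp [dQ, deriv_const]
    rwa [hz] at h
  -- second term
  have hΨd : Differentiable ℝ Ψ := hΨ.differentiable (by simp)
  have hΨ0 : HasDerivAt (fun s => Ψ (s, y.2.1, y.2.2)) 0 y.1 := by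
    have h := hasDerivAt_sliceP hΨd y
    have hz : fderiv ℝ Ψ y ((1 : ℝ), (0 : ℝ), (0 : ℝ)) = 0 := by
      have e1 := congrFun (dP_eq hΨd) y
      rw [← e1, hΨpol]; rfl
    rwa [hz] at h
  have ha : HasDerivAt (fun s : ℝ => ((s / hb : ℝ) : ℂ)) ((1 / hb : ℝ) : ℂ) y.1 := by
    have := ((hasDerivAt_id y.1).div_const hb).ofReal_comp
    simpa using this
  have hb2 : HasDerivAt (fun s => Complex.I * Ψ (s, y.2.1, y.2.2)) 0 y.1 := by
    simpa using hΨ0.const_mul Complex.I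
  have h2 := ha.mul hb2
  have h3 := h1.sub h2
  simp only [dP]
  erw [h3.deriv]
  push_cast
  ring

lemma Mop_tens_final (hH : ContDiff ℝ (⊤ : ℕ∞) H) (hHobs : dT H = 0)
    (G : ℝ × ℝ × ℝ → ℂ) :
    Mop hb (tens (dP H) G) =
      fun z => -(dQ (dP H) z.1 * dP G z.2) := by
  have hL2 : L2 dP (tens (dP H) G) = tens (dP H) (dP G) := by
    funext w
    simp only [L2, tens, dP]
    rw [deriv_const_mul_field]
  funext z
  simp only [Mop]
  rw [hL2]
  simp only [L1, tens, Bop, dQ, dT]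
  rw [deriv_mul_const_field, deriv_mul_const_field]
  have hT : dT (dP H) z.1 = 0 := by
    rw [dT_dP_comm hH, hHobs]
    simp [dP, deriv_const]
  simp only [dT] at hT
  rw [hT]
  ring

end Main

/-- The commutator of the lifted normal and anti-normal tensors on `H ⊗ Ψ`:
`(N∘M − M∘N)(H ⊗ Ψ) = −(i/ħ)(∂_q∂_p H) ⊗ Ψ`. -/
theorem normal_antinormal_commutator (hb : ℝ) (hhbar : 0 < hb)
    (H Ψ : ℝ × ℝ × ℝ → ℂ) (hH : ContDiff ℝ (⊤ : ℕ∞) H) (hΨ : ContDiff ℝ (⊤ : ℕ∞) Ψ)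
    (hHobs : dT H = 0)
    (hΨeq : dT Ψ = fun x => Complex.I * Ψ x) (hΨpol : dP Ψ = 0) :
    ∀ z : (ℝ × ℝ × ℝ) × (ℝ × ℝ × ℝ),
      Nop hb (Mop hb (tens H Ψ)) z - Mop hb (Nop hb (tens H Ψ)) z =
      -(Complex.I / (hb : ℂ)) * dQ (dP H) z.1 * Ψ z.2 := by
  intro z
  have hM0 : Mop hb (tens H Ψ) = fun _ => (0 : ℂ) := Mop_tens_zero hΨpol
  simp only [hM0, Nop_zero, Nop_tens, Mop_tens_final hH hHobs,
      dP_Bop_Ψ hΨ hΨeq hΨpol]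
  ring
end
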